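/- arXiv:0808.2662 — 7 statements merged into one kernel-verified Lean document; each statement's English description precedes it below -/
import Mathlib

section
/- For every economic cost function C : {0,1}^l → ℕ there exists a finite set U, a weight function w : U → ℕ, and a collection A = {A_1, ..., A_l} of subsets of U such that C_A(X) = C(X) for all X ∈ {0,1}^l. Concretely, one may take U = {b_X : X ∈ {0,1}^l} of size 2^l, A_i = {b_X : X_i = 1}, and w(b_X) = C(X). -/
/-- The weighted hitting set cost `C_A(X)`: the minimum total weight of a set
`B ⊆ U` intersecting every `A i` with `X i = true`. -/
noncomputable def hitCost {U : Type} [Fintype U] [DecidableEq U] {l : ℕ}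
    (w : U → ℕ) (A : Fin l → Finset U) (X : Fin l → Bool) : ℕ :=
  sInf {c | ∃ B : Finset U, (∀ i : Fin l, X i = true → ∃ u ∈ B, u ∈ A i) ∧
    (∑ u ∈ B, w u) = c}

/-- An economic cost function: nonnegative (zero exactly at `0`), monotone,
and subadditive with respect to coordinatewise OR. -/
def IsEconomicCost {l : ℕ} (C : (Fin l → Bool) → ℤ) : Prop :=
  (∀ X, 0 ≤ C X) ∧
  (∀ X, C X = 0 ↔ X = fun _ => false) ∧
  (∀ X Y : Fin l → Bool, (∀ i, X i = true → Y i = true) → C X ≤ C Y) ∧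
  (∀ X Y : Fin l → Bool, C (fun i => X i || Y i) ≤ C X + C Y)

/-- Finite subadditivity: if `B` covers `X` coordinatewise, then `C X ≤ ∑_{u∈B} C u`. -/
lemma cover_sum_le {l : ℕ} (C : (Fin l → Bool) → ℕ)
    (hC : IsEconomicCost (fun X => (C X : ℤ))) (B : Finset (Fin l → Bool))
    (X : Fin l → Bool) (hcov : ∀ i, X i = true → ∃ u ∈ B, u i = true) :
    C X ≤ ∑ u ∈ B, C u := by
  classical
  obtain ⟨hpos, hzero, hmono, hsub⟩ := hC
  induction B using Finset.induction_on generalizing X with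
  | empty =>
      have hX : X = fun _ => false := by
        funext i
        by_contra h
        have : X i = true := by
          cases hXi : X i
          · exact absurd hXi h
          · rfl
        obtain ⟨u, hu, _⟩ := hcov i this
        exact absurd hu (Finset.notMem_empty u)
      have : (C X : ℤ) = 0 := (hzero X).mpr hX
      simp [Nat.cast_eq_zero.mp this]
  | @insert a B' ha ih =>
      set X1 : Fin l → Bool := fun i => X i && a i with hX1
      set X2 : Fin l → Bool := fun i => X i && !(a i) with hX2
      have hXeq : X = fun i => X1 i || X2 i := by
        funext i
        simp only [hX1, hX2]
        cases X i <;> cases a i <;> rfl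
      have h1 : (C X1 : ℤ) ≤ (C a : ℤ) := by
        apply hmono
        intro i hi
        simp only [hX1, Bool.and_eq_true] at hi
        exact hi.2
      have h2 : C X2 ≤ ∑ u ∈ B', C u := by
        apply ih
        intro i hi
        simp only [hX2, Bool.and_eq_true, Bool.not_eq_true'] at hi
        obtain ⟨u, hu, hui⟩ := hcov i hi.1
        rcases Finset.mem_insert.mp hu with rfl | hu'
        · rw [hi.2] at hui; exact absurd hui (by simp)
        · exact ⟨u, hu', hui⟩
      have hsum : (C X : ℤ) ≤ (C X1 : ℤ) + (C X2 : ℤ) := by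
        rw [hXeq]; exact hsub X1 X2
      have : (C X : ℤ) ≤ (C a : ℤ) + (∑ u ∈ B', C u : ℕ) := by
        have := add_le_add h1 (by exact_mod_cast h2 : (C X2 : ℤ) ≤ ((∑ u ∈ B', C u : ℕ) : ℤ))
        linarith
      rw [Finset.sum_insert ha]
      exact_mod_cast this

/-- Every economic cost function is a weighted hitting set cost function.
Concretely, take `U = {0,1}^l`, `A i = {Y : Y i = 1}`, and `w(Y) = C(Y)`. -/
theorem econ_eq_hitCost {l : ℕ} (C : (Fin l → Bool) → ℕ)
    (hC : IsEconomicCost (fun X => (C X : ℤ))) :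
    ∀ X : Fin l → Bool,
      hitCost (U := Fin l → Bool) C
        (fun i => Finset.univ.filter (fun Y : Fin l → Bool => Y i = true)) X = C X := by
  classical
  intro X
  unfold hitCost
  apply le_antisymm
  · apply Nat.sInf_le
    refine ⟨{X}, ?_, by simp⟩
    intro i hi
    exact ⟨X, Finset.mem_singleton_self X, by simpa using hi⟩
  · apply le_csInf
    · exact ⟨C X, {X}, fun i hi => ⟨X, Finset.mem_singleton_self X, by simpa using hi⟩, by simp⟩
    · rintro c ⟨B, hB, rfl⟩
      apply cover_sum_le C hC B X
      intro i hi
      obtain ⟨u, hu, hui⟩ := hB i hi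
      simp only [Finset.mem_filter] at hui
      exact ⟨u, hu, hui.2⟩
end

section
/- For every unique search problem W ⊆ {0,1,*}^n, the decision tree complexity satisfies D(W) ≤ s(W)^2. -/
/-- A deterministic adaptive decision tree over inputs `x : Fin n → Bool`
with outputs in `β`. -/
inductive DTree (n : ℕ) (β : Type) : Type where
  | leaf : β → DTree n β
  | node : Fin n → DTree n β → DTree n β → DTree n β

namespace DTree

/-- Evaluate a decision tree on an input. -/
def eval {n : ℕ} {β : Type} : DTree n β → (Fin n → Bool) → β
  | .leaf b, _ => b
  | .node i t0 t1, x => if x i then eval t1 x else eval t0 x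

/-- Depth of a decision tree: the maximum number of queries on a root-to-leaf path. -/
def depth {n : ℕ} {β : Type} : DTree n β → ℕ
  | .leaf _ => 0
  | .node _ t0 t1 => 1 + max (depth t0) (depth t1)

end DTree

/-- A partial assignment (witness/clause) `w ∈ {0,1,*}^n` agrees with `x ∈ {0,1}^n`
if every 0/1 entry of `w` matches `x`. -/
def Agrees {n : ℕ} (w : Fin n → Option Bool) (x : Fin n → Bool) : Prop :=
  ∀ (i : Fin n) (b : Bool), w i = some b → x i = b

/-- The number of 0/1 (non-`*`) entries of a witness. -/
def wSize {n : ℕ} (w : Fin n → Option Bool) : ℕ :=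
  (Finset.univ.filter (fun i : Fin n => (w i).isSome)).card

/-- A decision tree `T` (outputting `some w'` or `none` for 'no match') solves the
search problem `W`: on inputs agreeing with some witness it outputs a witness of `W`
agreeing with the input, and otherwise it outputs `none`. -/
def Solves {n : ℕ} (T : DTree n (Option (Fin n → Option Bool)))
    (W : Set (Fin n → Option Bool)) : Prop :=
  ∀ x : Fin n → Bool,
    ((∃ w ∈ W, Agrees w x) → ∃ w' ∈ W, T.eval x = some w' ∧ Agrees w' x) ∧
    ((¬ ∃ w ∈ W, Agrees w x) → T.eval x = none)

/-- `s(W)`: the maximum number of 0/1 entries in any witness of `W`. -/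
noncomputable def sW {n : ℕ} (W : Set (Fin n → Option Bool)) : ℕ :=
  sSup (wSize '' W)

/-- `D(W)`: the minimum depth of a decision tree solving the search problem `W`. -/
noncomputable def DW {n : ℕ} (W : Set (Fin n → Option Bool)) : ℕ :=
  sInf {d | ∃ T : DTree n (Option (Fin n → Option Bool)), T.depth ≤ d ∧ Solves T W}

/-- `W` is a total search problem: every input agrees with some witness. -/
def TotalSP {n : ℕ} (W : Set (Fin n → Option Bool)) : Prop :=
  ∀ x : Fin n → Bool, ∃ w ∈ W, Agrees w x

/-- `W` is a unique search problem: every input agrees with at most one witness. -/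
def UniqueSP {n : ℕ} (W : Set (Fin n → Option Bool)) : Prop :=
  ∀ x : Fin n → Bool, ∀ w ∈ W, ∀ w' ∈ W, Agrees w x → Agrees w' x → w = w'

/-! Query the fixed coordinates of any witness `v` that is consistent with the answers seen so
far. Every other consistent witness `w` conflicts with `v` at some coordinate, by uniqueness,
and that coordinate is fixed in `w` but was not yet queried; so each round strictly shrinks the
set of unqueried fixed coordinates of every witness still in play. After `s(W)` rounds of at
most `s(W)` queries each, every witness consistent with the answers is fully read, so it either
agrees with the input or has been ruled out. -/

section PartialAssignment

variable {n : ℕ}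

def fixedCoords (w : Fin n → Option Bool) : Finset (Fin n) :=
  Finset.univ.filter fun i => (w i).isSome

def Extends (ρ w : Fin n → Option Bool) : Prop :=
  ∀ i b, w i = some b → ρ i = some b

def Consistent (ρ w : Fin n → Option Bool) : Prop :=
  ∀ i b c, ρ i = some b → w i = some c → b = c

variable {ρ ρ' w : Fin n → Option Bool} {x : Fin n → Bool}

lemma mem_fixedCoords {i : Fin n} : i ∈ fixedCoords w ↔ w i ≠ none := by
  simp [fixedCoords, Option.isSome_iff_ne_none]

lemma mem_fixedCoords_of_eq_some {i : Fin n} {b : Bool} (h : w i = some b) :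
    i ∈ fixedCoords w :=
  mem_fixedCoords.mpr (by simp [h])

lemma fixedCoords_mono (h : Extends ρ' ρ) : fixedCoords ρ ⊆ fixedCoords ρ' := by
  intro i hi
  obtain ⟨b, hb⟩ := Option.ne_none_iff_exists'.mp (mem_fixedCoords.mp hi)
  exact mem_fixedCoords_of_eq_some (h i b hb)

lemma Agrees.of_extends (hρ : Agrees ρ x) (h : Extends ρ w) : Agrees w x :=
  fun i b hb => hρ i b (h i b hb)

lemma Agrees.consistent (hρ : Agrees ρ x) (hw : Agrees w x) : Consistent ρ w :=
  fun i b c hb hc => (hρ i b hb).symm.trans (hw i c hc)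

lemma Consistent.of_extends (h : Consistent ρ' w) (hext : Extends ρ' ρ) : Consistent ρ w :=
  fun i b c hb hc => h i b c (hext i b hb) hc

lemma Consistent.extends_of_subset (h : Consistent ρ w)
    (hsub : fixedCoords w ⊆ fixedCoords ρ) : Extends ρ w := by
  intro i c hc
  obtain ⟨b, hb⟩ := Option.ne_none_iff_exists'.mp
    (mem_fixedCoords.mp (hsub (mem_fixedCoords_of_eq_some hc)))
  rw [hb, h i b c hb hc]

end PartialAssignment

section SearchProblem

variable {n : ℕ} {W : Set (Fin n → Option Bool)}

lemma wSize_le_sW {w : Fin n → Option Bool} (hw : w ∈ W) : wSize w ≤ sW W :=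
  le_csSup ⟨n, by rintro _ ⟨v, -, rfl⟩; exact (Finset.card_filter_le _ _).trans (by simp)⟩
    ⟨w, hw, rfl⟩

lemma UniqueSP.eq_of_consistent (hU : UniqueSP W) {v w : Fin n → Option Bool}
    (hv : v ∈ W) (hw : w ∈ W) (h : Consistent v w) : v = w := by
  let x i := (v i).getD ((w i).getD false)
  refine hU x v hv w hw (fun i b hb => by simp [x, hb]) fun i c hc => ?_
  cases hvi : v i with
  | none => simp [x, hvi, hc]
  | some b => simp [x, hvi, h i b c hvi hc]

lemma UniqueSP.card_unqueried_lt (hU : UniqueSP W) {ρ ρ' v w : Fin n → Option Bool}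
    (hv : v ∈ W) (hw : w ∈ W) (hne : w ≠ v) (hρv : Consistent ρ v) (hρw : Consistent ρ w)
    (hext : Extends ρ' ρ) (hvρ' : fixedCoords v ⊆ fixedCoords ρ') :
    (fixedCoords w \ fixedCoords ρ').card < (fixedCoords w \ fixedCoords ρ).card := by
  have hconflict : ¬ Consistent v w := fun h => hne (hU.eq_of_consistent hv hw h).symm
  simp only [Consistent, not_forall] at hconflict
  obtain ⟨i, b, c, hb, hc, hbc⟩ := hconflict
  have hρi : ρ i = none := by
    by_contra hρi
    obtain ⟨a, ha⟩ := Option.ne_none_iff_exists'.mp hρi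
    exact hbc ((hρv i a b ha hb).symm.trans (hρw i a c ha hc))
  refine Finset.card_lt_card <| (Finset.ssubset_iff_of_subset
    (Finset.sdiff_subset_sdiff subset_rfl (fixedCoords_mono hext))).mpr ⟨i, ?_, ?_⟩
  · simp [mem_fixedCoords, hc, hρi]
  · simp only [Finset.mem_sdiff, not_and, not_not]
    exact fun _ => hvρ' (mem_fixedCoords_of_eq_some hb)

def fill (x : Fin n → Bool) (l : List (Fin n)) (ρ : Fin n → Option Bool) :
    Fin n → Option Bool :=
  fun j => if j ∈ l then some (x j) else ρ j

section Fill

variable {x : Fin n → Bool} {l : List (Fin n)} {ρ : Fin n → Option Bool}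

lemma fill_cons (i : Fin n) :
    fill x (i :: l) ρ = fill x l (Function.update ρ i (some (x i))) := by
  funext j
  by_cases hj : j = i
  · subst hj; simp [fill]
  · simp [fill, hj]

lemma agrees_fill (hρ : Agrees ρ x) : Agrees (fill x l ρ) x := by
  intro i b hb
  unfold fill at hb
  split_ifs at hb
  exacts [Option.some_injective _ hb, hρ i b hb]

lemma extends_fill (hρ : Agrees ρ x) : Extends (fill x l ρ) ρ := by
  intro i b hb
  simp [fill, hb, hρ i b hb]

lemma mem_fixedCoords_fill {i : Fin n} (hi : i ∈ l) : i ∈ fixedCoords (fill x l ρ) := by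
  simp [mem_fixedCoords, fill, hi]

end Fill

namespace DTree

variable {β : Type}

def queryAll : List (Fin n) → (Fin n → Option Bool) →
    ((Fin n → Option Bool) → DTree n β) → DTree n β
  | [], ρ, k => k ρ
  | i :: l, ρ, k =>
    .node i (queryAll l (Function.update ρ i (some false)) k)
      (queryAll l (Function.update ρ i (some true)) k)

lemma eval_queryAll (l : List (Fin n)) (ρ : Fin n → Option Bool)
    (k : (Fin n → Option Bool) → DTree n β) (x : Fin n → Bool) :
    (queryAll l ρ k).eval x = (k (fill x l ρ)).eval x := by
  induction l generalizing ρ with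
  | nil => rfl
  | cons i l ih =>
    rw [fill_cons]
    cases hx : x i <;> simp [queryAll, eval, hx, ih]

lemma depth_queryAll_le (l : List (Fin n)) (ρ : Fin n → Option Bool)
    {k : (Fin n → Option Bool) → DTree n β} {d : ℕ} (hk : ∀ ρ, (k ρ).depth ≤ d) :
    (queryAll l ρ k).depth ≤ l.length + d := by
  induction l generalizing ρ with
  | nil => simpa [queryAll] using hk ρ
  | cons i l ih =>
    have h0 := ih (Function.update ρ i (some false))
    have h1 := ih (Function.update ρ i (some true))
    simp only [queryAll, depth, List.length_cons]
    omega

end DTree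

open DTree

def SolvesAt (T : DTree n (Option (Fin n → Option Bool))) (W : Set (Fin n → Option Bool))
    (x : Fin n → Bool) : Prop :=
  ((∃ w ∈ W, Agrees w x) → ∃ w' ∈ W, T.eval x = some w' ∧ Agrees w' x) ∧
    ((¬ ∃ w ∈ W, Agrees w x) → T.eval x = none)

section SolvesAt

variable {x : Fin n → Bool}

lemma solvesAt_leaf_some {w : Fin n → Option Bool} (hw : w ∈ W) (hx : Agrees w x) :
    SolvesAt (.leaf (some w)) W x :=
  ⟨fun _ => ⟨w, hw, rfl, hx⟩, fun h => (h ⟨w, hw, hx⟩).elim⟩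

lemma solvesAt_leaf_none (h : ¬ ∃ w ∈ W, Agrees w x) : SolvesAt (.leaf none) W x :=
  ⟨fun h' => (h h').elim, fun _ => rfl⟩

lemma solvesAt_queryAll {l : List (Fin n)} {ρ : Fin n → Option Bool}
    {k : (Fin n → Option Bool) → DTree n (Option (Fin n → Option Bool))}
    (h : SolvesAt (k (fill x l ρ)) W x) : SolvesAt (queryAll l ρ k) W x := by
  simpa only [SolvesAt, eval_queryAll] using h

end SolvesAt

open Classical in
noncomputable def solver (W : Set (Fin n → Option Bool)) :
    ℕ → (Fin n → Option Bool) → DTree n (Option (Fin n → Option Bool))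
  | 0, ρ => if h : ∃ w ∈ W, Extends ρ w then .leaf (some h.choose) else .leaf none
  | fuel + 1, ρ =>
    if h : ∃ w ∈ W, Extends ρ w then .leaf (some h.choose)
    else if h' : ∃ w ∈ W, Consistent ρ w then
      queryAll (fixedCoords h'.choose).toList ρ (solver W fuel)
    else .leaf none

lemma depth_solver_le (fuel : ℕ) (ρ : Fin n → Option Bool) :
    (solver W fuel ρ).depth ≤ fuel * sW W := by
  induction fuel generalizing ρ with
  | zero => unfold solver; split_ifs <;> simp [depth]
  | succ fuel ih =>
    unfold solver
    split_ifs with h h'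
    · simp [depth]
    · calc _ ≤ (fixedCoords h'.choose).toList.length + fuel * sW W :=
            depth_queryAll_le _ _ ih
        _ ≤ sW W + fuel * sW W := by
            rw [Finset.length_toList]; exact Nat.add_le_add_right (wSize_le_sW h'.choose_spec.1) _
        _ = (fuel + 1) * sW W := by ring
    · simp [depth]

lemma solvesAt_solver (hU : UniqueSP W) (x : Fin n → Bool) (fuel : ℕ)
    (ρ : Fin n → Option Bool) (hρ : Agrees ρ x)
    (hfuel : ∀ w ∈ W, Consistent ρ w → (fixedCoords w \ fixedCoords ρ).card ≤ fuel) :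
    SolvesAt (solver W fuel ρ) W x := by
  induction fuel generalizing ρ with
  | zero =>
    unfold solver
    split_ifs with h
    · exact solvesAt_leaf_some h.choose_spec.1 (hρ.of_extends h.choose_spec.2)
    · refine solvesAt_leaf_none fun ⟨w, hw, hxw⟩ => h ⟨w, hw, ?_⟩
      have hc := hρ.consistent hxw
      exact hc.extends_of_subset (by simpa using hfuel w hw hc)
  | succ fuel ih =>
    unfold solver
    split_ifs with h h'
    · exact solvesAt_leaf_some h.choose_spec.1 (hρ.of_extends h.choose_spec.2)
    · obtain ⟨hv, hρv⟩ := h'.choose_spec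
      set v := h'.choose
      have hvρ' : fixedCoords v ⊆ fixedCoords (fill x (fixedCoords v).toList ρ) :=
        fun i hi => mem_fixedCoords_fill (Finset.mem_toList.mpr hi)
      refine solvesAt_queryAll (ih _ (agrees_fill hρ) fun w hw hc => ?_)
      by_cases hwv : w = v
      · simp [hwv, Finset.sdiff_eq_empty_iff_subset.mpr hvρ']
      · have hρw := hc.of_extends (extends_fill hρ)
        have := hU.card_unqueried_lt hv hw hwv hρv hρw (extends_fill hρ) hvρ'
        have := hfuel w hw hρw
        omega
    · exact solvesAt_leaf_none fun ⟨w, hw, hxw⟩ => h' ⟨w, hw, hρ.consistent hxw⟩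

end SearchProblem

/-- For every unique search problem `W ⊆ {0,1,*}^n`,
`D(W) ≤ s(W)^2`. -/
theorem DW_le_sW_sq {n : ℕ} (W : Set (Fin n → Option Bool)) (hU : UniqueSP W) :
    DW W ≤ (sW W) ^ 2 := by
  have hsolves : Solves (solver W (sW W) fun _ => none) W := fun x =>
    solvesAt_solver hU x _ _ (fun _ _ h => nomatch h) fun w hw _ => by
      simpa [fixedCoords, wSize] using wSize_le_sW hw
  exact Nat.sInf_le ⟨_, (depth_solver_le _ _).trans_eq (sq _).symm, hsolves⟩
end

section
/- There exists a constant α > 0 and a family of total unique search problems {W_N ⊆ {0,1,*}^{m(N)}} for N = 1, 2, 3, ..., with m(N) bounded by a polynomial in N, such that for all sufficiently large N: D(W_N) ≥ s(W_N)^{1+α} and s(W_N) ≥ N. -/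
/-!
Savický's function `f x = ¬x₀ ∧ (¬x₁ ∧ ¬x₂ ∨ x₁ ∧ ¬x₃ ∨ x₂ ∧ x₃)` is constant on each cube of a
partition of `{0,1}⁴` into eight cubes fixing three variables each, yet it is evasive: an adversary
forces every decision tree to query all four variables. Composing the partition with itself `k`
times gives a total unique search problem on `4^(k+1)` variables all of whose witnesses fix
`3^(k+1)` entries. Evasiveness survives composition: the adversary plays the inner adversary on
each block until the block's last variable is queried and then lets the outer adversary choose
the block's value. A solver of the search problem determines the composed function, so it needs
`4^(k+1) = s^(log₃ 4)` queries.
-/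

open Function Finset

section Subcube

variable {ι ι' : Type*}

def InSubcube (w : ι → Option Bool) (x : ι → Bool) : Prop :=
  ∀ i b, w i = some b → x i = b

instance [Fintype ι] (w : ι → Option Bool) (x : ι → Bool) : Decidable (InSubcube w x) :=
  inferInstanceAs (Decidable (∀ _ _, _))

theorem inSubcube_getD (w : ι → Option Bool) : InSubcube w fun i => (w i).getD false := by
  intro i b h
  simp [h]

theorem inSubcube_comp_symm (e : ι ≃ ι') (w : ι → Option Bool) (x : ι' → Bool) :
    InSubcube (w ∘ e.symm) x ↔ InSubcube w (x ∘ e) := by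
  refine ⟨fun h i b hb => h (e i) b (by simpa using hb), fun h i b hb => ?_⟩
  simpa using h (e.symm i) b hb

theorem inSubcube_update_iff [DecidableEq ι] {ρ : ι → Option Bool} {i : ι} (hi : ρ i = none)
    {c : Bool} {x : ι → Bool} : InSubcube (update ρ i (some c)) x ↔ InSubcube ρ x ∧ x i = c := by
  refine ⟨fun h => ⟨fun j b hj => h j b ?_, h i c (by simp)⟩, fun ⟨h, hxi⟩ j b hj => ?_⟩
  · rwa [update_of_ne (by rintro rfl; simp [hi] at hj)]
  · by_cases hji : j = i
    · subst hji
      simp_all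
    · exact h j b (by rwa [update_of_ne hji] at hj)

variable [Fintype ι] [Fintype ι']

def fixedCount (w : ι → Option Bool) : ℕ :=
  #{i | (w i).isSome}

def freeCount (ρ : ι → Option Bool) : ℕ :=
  #{i | ρ i = none}

theorem freeCount_update_add_one [DecidableEq ι] {ρ : ι → Option Bool} {i : ι} (hi : ρ i = none)
    (c : Bool) : freeCount (update ρ i (some c)) + 1 = freeCount ρ := by
  have : ({j | update ρ i (some c) j = none} : Finset ι) =
      ({j | ρ j = none} : Finset ι).erase i := by
    ext j
    by_cases hji : j = i
    · subst hji; simp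
    · simp [hji]
  rw [freeCount, freeCount, this, card_erase_add_one (by simpa using hi)]

theorem one_lt_freeCount_iff {ρ : ι → Option Bool} {i : ι} (hi : ρ i = none) :
    1 < freeCount ρ ↔ ∃ j, ρ j = none ∧ j ≠ i := by
  constructor
  · intro h
    obtain ⟨j, hj, hji⟩ := exists_mem_ne h i
    exact ⟨j, by simpa using hj, hji⟩
  · rintro ⟨j, hj, hji⟩
    exact one_lt_card.mpr ⟨j, by simpa using hj, i, by simpa using hi, hji⟩

theorem freeCount_comp_symm (e : ι ≃ ι') (ρ : ι → Option Bool) :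
    freeCount (ρ ∘ e.symm) = freeCount ρ :=
  card_equiv e.symm (by simp)

theorem fixedCount_comp_symm (e : ι ≃ ι') (w : ι → Option Bool) :
    fixedCount (w ∘ e.symm) = fixedCount w :=
  card_equiv e.symm (by simp)

end Subcube

section Evasive

variable {ι ι' : Type*}

def NonconstOn (ρ : ι → Option Bool) (f : (ι → Bool) → Bool) : Prop :=
  ∃ x y, InSubcube ρ x ∧ InSubcube ρ y ∧ f x ≠ f y

instance [Fintype ι] [DecidableEq ι] (ρ : ι → Option Bool) (f : (ι → Bool) → Bool) :
    Decidable (NonconstOn ρ f) :=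
  inferInstanceAs (Decidable (∃ _ _, _))

theorem NonconstOn.exists_eq {ρ : ι → Option Bool} {f : (ι → Bool) → Bool} (h : NonconstOn ρ f)
    (v : Bool) : ∃ x, InSubcube ρ x ∧ f x = v := by
  obtain ⟨x, y, hx, hy, hne⟩ := h
  by_cases hv : f x = v
  · exact ⟨x, hx, hv⟩
  · exact ⟨y, hy, by cases v <;> cases hfx : f x <;> simp_all⟩

theorem NonconstOn.comp_symm {ρ : ι → Option Bool} {f : (ι → Bool) → Bool} (h : NonconstOn ρ f)
    (e : ι ≃ ι') : NonconstOn (ρ ∘ e.symm) fun x => f (x ∘ e) := by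
  obtain ⟨x, y, hx, hy, hne⟩ := h
  refine ⟨x ∘ e.symm, y ∘ e.symm, ?_, ?_, by simpa [comp_assoc] using hne⟩ <;>
    simpa [inSubcube_comp_symm, comp_assoc]

variable [DecidableEq ι] [DecidableEq ι']

/-- `Evades f k ρ`: an adversary answering queries outside `ρ` can keep `f` nonconstant
for `k` further queries. -/
def Evades (f : (ι → Bool) → Bool) : ℕ → (ι → Option Bool) → Prop
  | 0, ρ => NonconstOn ρ f
  | k + 1, ρ => NonconstOn ρ f ∧ ∀ i, ρ i = none → ∃ c, Evades f k (update ρ i (some c))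

instance Evades.instDecidable [Fintype ι] (f : (ι → Bool) → Bool) :
    ∀ k (ρ : ι → Option Bool), Decidable (Evades f k ρ)
  | 0, ρ => inferInstanceAs (Decidable (NonconstOn ρ f))
  | k + 1, _ =>
    haveI := fun ρ' => Evades.instDecidable f k ρ'
    inferInstanceAs (Decidable (_ ∧ ∀ _, _ → ∃ _, _))

theorem Evades.nonconstOn {f : (ι → Bool) → Bool} {k : ℕ} {ρ : ι → Option Bool}
    (h : Evades f k ρ) : NonconstOn ρ f := by
  cases k
  exacts [h, h.1]

theorem Evades.comp_symm {f : (ι → Bool) → Bool} (e : ι ≃ ι') :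
    ∀ {k} {ρ : ι → Option Bool}, Evades f k ρ → Evades (fun x => f (x ∘ e)) k (ρ ∘ e.symm)
  | 0, _, h => NonconstOn.comp_symm h e
  | k + 1, ρ, h => by
    refine ⟨h.1.comp_symm e, fun i hi => ?_⟩
    obtain ⟨c, hc⟩ := h.2 (e.symm i) hi
    refine ⟨c, ?_⟩
    simpa [update_comp_equiv] using hc.comp_symm e

variable [Fintype ι] [Fintype ι']

/-- An adversary keeps `f` nonconstant until a single free variable of `ρ` is left, so every
decision tree computing `f` on `ρ` queries all of them. -/
def Evasive (f : (ι → Bool) → Bool) (ρ : ι → Option Bool) : Prop :=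
  Evades f (freeCount ρ - 1) ρ

variable {f : (ι → Bool) → Bool} {ρ : ι → Option Bool}

theorem Evasive.nonconstOn (h : Evasive f ρ) : NonconstOn ρ f :=
  Evades.nonconstOn h

theorem evasive_iff_of_one_lt_freeCount (hρ : 1 < freeCount ρ) :
    Evasive f ρ ↔ NonconstOn ρ f ∧ ∀ i, ρ i = none → ∃ c, Evasive f (update ρ i (some c)) := by
  obtain ⟨k, hk⟩ : ∃ k, freeCount ρ = k + 2 := ⟨freeCount ρ - 2, by omega⟩
  rw [Evasive, hk]
  refine and_congr_right fun _ => forall₂_congr fun i hi => exists_congr fun c => ?_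
  have := freeCount_update_add_one hi c
  rw [Evasive, show freeCount (update ρ i (some c)) - 1 = k by omega]

theorem Evasive.exists_update (h : Evasive f ρ) {i j : ι} (hi : ρ i = none) (hj : ρ j = none)
    (hji : j ≠ i) : ∃ c, Evasive f (update ρ i (some c)) :=
  ((evasive_iff_of_one_lt_freeCount ((one_lt_freeCount_iff hi).mpr ⟨j, hj, hji⟩)).mp h).2 i hi

theorem Evasive.intro (hf : NonconstOn ρ f)
    (hstep : ∀ i j, ρ i = none → ρ j = none → j ≠ i → ∃ c, Evasive f (update ρ i (some c))) :
    Evasive f ρ := by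
  by_cases hρ : 1 < freeCount ρ
  · refine (evasive_iff_of_one_lt_freeCount hρ).mpr ⟨hf, fun i hi => ?_⟩
    obtain ⟨j, hj, hji⟩ := (one_lt_freeCount_iff hi).mp hρ
    exact hstep i j hi hj hji
  · rw [Evasive, show freeCount ρ - 1 = 0 by omega]
    exact hf

theorem Evasive.comp_symm (h : Evasive f ρ) (e : ι ≃ ι') :
    Evasive (fun x => f (x ∘ e)) (ρ ∘ e.symm) := by
  unfold Evasive
  rw [freeCount_comp_symm]
  exact Evades.comp_symm e h

end Evasive

section DecisionTree

variable {n : ℕ} {β : Type}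

theorem DTree.eval_node (i : Fin n) (t₀ t₁ : DTree n β) (x : Fin n → Bool) :
    (DTree.node i t₀ t₁).eval x = (cond (x i) t₁ t₀).eval x := by
  cases h : x i <;> simp [DTree.eval, h]

theorem Evasive.freeCount_le_depth {f : (Fin n → Bool) → Bool} (out : β → Bool)
    (T : DTree n β) {ρ : Fin n → Option Bool} (hf : Evasive f ρ)
    (hT : ∀ x, InSubcube ρ x → out (T.eval x) = f x) : freeCount ρ ≤ T.depth := by
  induction T generalizing ρ with
  | leaf b =>
    obtain ⟨x, y, hx, hy, hne⟩ := hf.nonconstOn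
    exact absurd ((hT x hx).symm.trans (hT y hy)) hne
  | node i t₀ t₁ ih₀ ih₁ =>
    by_cases hle : freeCount ρ ≤ 1
    · exact hle.trans (by simp [DTree.depth])
    obtain ⟨c, ρ', hf', hρ', hcount⟩ : ∃ c ρ', Evasive f ρ' ∧
        (∀ x, InSubcube ρ' x → InSubcube ρ x ∧ x i = c) ∧ freeCount ρ ≤ freeCount ρ' + 1 := by
      cases hi : ρ i with
      | some c => exact ⟨c, ρ, hf, fun x hx => ⟨hx, hx i c hi⟩, by omega⟩
      | none =>
        obtain ⟨j, hj, hji⟩ := (one_lt_freeCount_iff hi).mp (by omega)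
        obtain ⟨c, hc⟩ := hf.exists_update hi hj hji
        exact ⟨c, _, hc, fun x hx => (inSubcube_update_iff hi).mp hx,
          (freeCount_update_add_one hi c).ge⟩
    have hchild : ∀ x, InSubcube ρ' x → out ((cond c t₁ t₀).eval x) = f x := by
      intro x hx
      obtain ⟨hx, hxi⟩ := hρ' x hx
      simpa [DTree.eval_node, hxi] using hT x hx
    simp only [DTree.depth]
    cases c
    · linarith [ih₀ hf' hchild, le_max_left t₀.depth t₁.depth]
    · linarith [ih₁ hf' hchild, le_max_right t₀.depth t₁.depth]

def queryAll (G : (Fin n → Bool) → β) : List (Fin n) → (Fin n → Bool) → DTree n β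
  | [], x₀ => .leaf (G x₀)
  | i :: l, x₀ => .node i (queryAll G l (update x₀ i false)) (queryAll G l (update x₀ i true))

theorem eval_queryAll (G : (Fin n → Bool) → β) :
    ∀ (l : List (Fin n)) (x₀ x : Fin n → Bool), (∀ j ∉ l, x j = x₀ j) →
      (queryAll G l x₀).eval x = G x
  | [], x₀, x, hx => by
    rw [funext fun j => hx j List.not_mem_nil]
    rfl
  | i :: l, x₀, x, hx => by
    have hchild : (queryAll G (i :: l) x₀).eval x = (queryAll G l (update x₀ i (x i))).eval x := by
      cases h : x i <;> simp [queryAll, DTree.eval, h]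
    rw [hchild, eval_queryAll G l]
    intro j hj
    by_cases hji : j = i
    · subst hji; simp
    · rw [update_of_ne hji]
      exact hx j (by simp [hji, hj])

theorem exists_solves (W : Set (Fin n → Option Bool)) :
    ∃ T : DTree n (Option (Fin n → Option Bool)), Solves T W := by
  classical
  let G x : Option (Fin n → Option Bool) := if h : ∃ w ∈ W, Agrees w x then some h.choose else none
  refine ⟨queryAll G (List.finRange n) (fun _ => false), fun x => ?_⟩
  rw [eval_queryAll G _ _ x (by simp)]
  refine ⟨fun h => ?_, fun h => by simp [G, h]⟩
  exact ⟨h.choose, h.choose_spec.1, by simp [G, h], h.choose_spec.2⟩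

theorem le_DW_of_evasive {W : Set (Fin n → Option Bool)} (hW : TotalSP W)
    {f : (Fin n → Bool) → Bool} (hconst : ∀ w ∈ W, ∀ x y, Agrees w x → Agrees w y → f x = f y)
    (hf : Evasive f fun _ => none) : n ≤ DW W := by
  obtain ⟨T₀, hT₀⟩ := exists_solves W
  refine le_csInf ⟨_, T₀, le_rfl, hT₀⟩ ?_
  rintro d ⟨T, hd, hT⟩
  -- a solver also computes `f`: read `f` off any completion of the witness it returns
  let out : Option (Fin n → Option Bool) → Bool
    | some w => f fun i => (w i).getD false
    | none => false
  have hout : ∀ x, InSubcube (fun _ => none) x → out (T.eval x) = f x := by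
    intro x _
    obtain ⟨w, hw, hTx, hwx⟩ := (hT x).1 (hW x)
    rw [hTx]
    exact hconst w hw _ _ (inSubcube_getD w) hwx
  have := hf.freeCount_le_depth out T hout
  simp only [freeCount, Finset.filter_true, Finset.card_univ, Fintype.card_fin] at this
  omega

end DecisionTree

section Partition

variable {ι : Type*}

def Covers (P : Set (Bool × (ι → Option Bool))) : Prop :=
  ∀ x, ∃ p ∈ P, InSubcube p.2 x

def Nonoverlapping (P : Set (Bool × (ι → Option Bool))) : Prop :=
  ∀ x, ∀ p ∈ P, ∀ q ∈ P, InSubcube p.2 x → InSubcube q.2 x → p = q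

def Computes (P : Set (Bool × (ι → Option Bool))) (f : (ι → Bool) → Bool) : Prop :=
  ∀ p ∈ P, ∀ x, InSubcube p.2 x → f x = p.1

end Partition

section Compose

variable {α κ : Type*}

theorem inSubcube_uncurry {C : α → κ → Option Bool} {x : α × κ → Bool} :
    InSubcube (uncurry C) x ↔ ∀ i, InSubcube (C i) (curry x i) :=
  ⟨fun h i j b hb => h (i, j) b hb, fun h ⟨i, j⟩ b hb => h i j b hb⟩

theorem inSubcube_none (x : κ → Bool) : InSubcube (fun _ => none) x := by
  intro j b hb
  simp at hb

def composeFun (f : (α → Bool) → Bool) (g : (κ → Bool) → Bool) (x : α × κ → Bool) : Bool :=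
  f fun i => g (curry x i)

/-- Each fixed outer coordinate `A i = some a` of a cube of `B` is refined by a cube of `P`
labelled `a` on block `i`. -/
def compose (B : Set (Bool × (α → Option Bool))) (P : Set (Bool × (κ → Option Bool))) :
    Set (Bool × (α × κ → Option Bool)) :=
  {q | ∃ (A : α → Option Bool) (C : α → κ → Option Bool), (q.1, A) ∈ B ∧
    (∀ i a, A i = some a → (a, C i) ∈ P) ∧ (∀ i, A i = none → C i = fun _ => none) ∧
    q.2 = uncurry C}

variable {B : Set (Bool × (α → Option Bool))} {P : Set (Bool × (κ → Option Bool))}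

theorem Covers.compose (hB : Covers B) (hP : Covers P) : Covers (compose B P) := by
  intro x
  choose p hpP hpx using fun i => hP (curry x i)
  obtain ⟨⟨b, A⟩, hA, hAy⟩ := hB fun i => (p i).1
  classical
  let C i : κ → Option Bool := if A i = none then fun _ => none else (p i).2
  refine ⟨(b, uncurry C), ⟨A, C, hA, fun i a ha => ?_, fun i ha => by simp [C, ha], rfl⟩, ?_⟩
  · obtain rfl : (p i).1 = a := hAy i a ha
    simpa [C, ha] using hpP i
  · refine (inSubcube_uncurry (C := C)).mpr fun i => ?_
    by_cases hAi : A i = none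
    · simpa [C, hAi] using inSubcube_none _
    · simpa [C, hAi] using hpx i

theorem Nonoverlapping.compose (hB : Nonoverlapping B) (hPc : Covers P) (hP : Nonoverlapping P) :
    Nonoverlapping (compose B P) := by
  rintro x ⟨b, _⟩ ⟨A, C, hA, hC, hCn, rfl⟩ ⟨b', _⟩ ⟨A', C', hA', hC', hCn', rfl⟩ hx hx'
  choose p hpP hpx using fun i => hPc (curry x i)
  have key : ∀ (A : α → Option Bool) (C : α → κ → Option Bool),
      (∀ i a, A i = some a → (a, C i) ∈ P) → InSubcube (uncurry C) x →
      ∀ i a, A i = some a → (a, C i) = p i := fun A C hC hx i a ha =>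
    hP (curry x i) _ (hC i a ha) _ (hpP i) (inSubcube_uncurry.mp hx i) (hpx i)
  have hy : ∀ (A : α → Option Bool) (C : α → κ → Option Bool),
      (∀ i a, A i = some a → (a, C i) ∈ P) → InSubcube (uncurry C) x →
      InSubcube A fun i => (p i).1 := fun A C hC hx i a ha =>
    (congrArg Prod.fst (key A C hC hx i a ha)).symm
  obtain ⟨rfl, rfl⟩ := Prod.ext_iff.mp (hB _ _ hA _ hA' (hy A C hC hx) (hy A' C' hC' hx'))
  have hCC : C = C' := by
    funext i
    cases hAi : A i with
    | none => rw [hCn i hAi, hCn' i hAi]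
    | some a =>
      exact congrArg Prod.snd ((key A C hC hx i a hAi).trans (key A C' hC' hx' i a hAi).symm)
  simp [hCC]

theorem Computes.compose {f : (α → Bool) → Bool} {g : (κ → Bool) → Bool} (hB : Computes B f)
    (hP : Computes P g) : Computes (compose B P) (composeFun f g) := by
  rintro ⟨b, _⟩ ⟨A, C, hA, hC, -, rfl⟩ x hx
  exact hB _ hA _ fun i a ha => hP _ (hC i a ha) _ (inSubcube_uncurry.mp hx i)

variable [Fintype α] [Fintype κ]

theorem fixedCount_uncurry (C : α → κ → Option Bool) :
    fixedCount (uncurry C) = ∑ i, fixedCount (C i) := by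
  simp only [fixedCount, card_filter, Fintype.sum_prod_type, uncurry_apply_pair]
  rfl

theorem fixedCount_compose {a S : ℕ} (hB : ∀ p ∈ B, fixedCount p.2 = a)
    (hP : ∀ p ∈ P, fixedCount p.2 = S) : ∀ q ∈ compose B P, fixedCount q.2 = a * S := by
  rintro ⟨b, _⟩ ⟨A, C, hA, hC, hCn, rfl⟩
  have hblock : ∀ i, fixedCount (C i) = if (A i).isSome then S else 0 := by
    intro i
    cases hAi : A i with
    | none => simp [hCn i hAi, fixedCount]
    | some a => simpa using hP _ (hC i a hAi)
  rw [fixedCount_uncurry, Finset.sum_congr rfl fun i _ => hblock i, ← hB _ hA, fixedCount,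
    card_filter, sum_mul]
  simp

end Compose

section ComposeEvasive

variable {α κ : Type*} [Fintype α] [DecidableEq α] [Fintype κ] [DecidableEq κ]
  {f : (α → Bool) → Bool} {g : (κ → Bool) → Bool}

/-- Adversary for `composeFun f g`: an open block (`σ i = none`) is answered by an adversary
for `g`; when its last variable is queried, the adversary for `f`, which plays `σ`, picks the
block's `g`-value and the block is closed. -/
structure BlockAdversary (f : (α → Bool) → Bool) (g : (κ → Bool) → Bool) (σ : α → Option Bool)
    (ρ : α → κ → Option Bool) : Prop where
  evasive_outer : Evasive f σ
  evasive_inner : ∀ i, σ i = none → Evasive g (ρ i)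
  closed : ∀ i v, σ i = some v → ∃ p, (ρ i = fun j => some (p j)) ∧ g p = v

namespace BlockAdversary

variable {σ : α → Option Bool} {ρ : α → κ → Option Bool}

theorem outer_eq_none (h : BlockAdversary f g σ ρ) {i : α} {j : κ} (hij : ρ i j = none) :
    σ i = none := by
  cases hσ : σ i with
  | none => rfl
  | some v =>
    obtain ⟨p, hp, -⟩ := h.closed i v hσ
    simp [hp] at hij

theorem nonconstOn (h : BlockAdversary f g σ ρ) : NonconstOn (uncurry ρ) (composeFun f g) := by
  have hlift : ∀ y, InSubcube σ y → ∃ x, InSubcube (uncurry ρ) x ∧ composeFun f g x = f y := by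
    intro y hy
    have hblock : ∀ i, ∃ p, InSubcube (ρ i) p ∧ g p = y i := by
      intro i
      cases hσ : σ i with
      | none => exact (h.evasive_inner i hσ).nonconstOn.exists_eq (y i)
      | some v =>
        obtain ⟨p, hp, hgp⟩ := h.closed i v hσ
        exact ⟨p, by simp [hp, InSubcube], hgp.trans (hy i v hσ).symm⟩
    choose p hp hgp using hblock
    exact ⟨uncurry p, inSubcube_uncurry.mpr hp, congrArg f (funext hgp)⟩
  obtain ⟨y₀, y₁, hy₀, hy₁, hne⟩ := h.evasive_outer.nonconstOn
  obtain ⟨x₀, hx₀, hfx₀⟩ := hlift y₀ hy₀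
  obtain ⟨x₁, hx₁, hfx₁⟩ := hlift y₁ hy₁
  exact ⟨x₀, x₁, hx₀, hx₁, by rwa [hfx₀, hfx₁]⟩

theorem exists_update (h : BlockAdversary f g σ ρ) {i i' : α} {j j' : κ} (hij : ρ i j = none)
    (hij' : ρ i' j' = none) (hne : (i', j') ≠ (i, j)) :
    ∃ c σ', BlockAdversary f g σ' (update ρ i (update (ρ i) j (some c))) := by
  have hσi := h.outer_eq_none hij
  by_cases hlast : ∃ j'', ρ i j'' = none ∧ j'' ≠ j
  · obtain ⟨j'', hj'', hne''⟩ := hlast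
    obtain ⟨c, hc⟩ := (h.evasive_inner i hσi).exists_update hij hj'' hne''
    refine ⟨c, σ, ⟨h.evasive_outer, fun k hk => ?_, fun k v hk => ?_⟩⟩
    · by_cases hki : k = i
      · subst hki; simpa using hc
      · simpa [hki] using h.evasive_inner k hk
    · have hki : k ≠ i := by rintro rfl; simp [hσi] at hk
      simpa [hki] using h.closed k v hk
  · push Not at hlast
    have hi'i : i' ≠ i := by
      rintro rfl
      exact hne (by rw [hlast j' hij'])
    obtain ⟨v, hv⟩ := h.evasive_outer.exists_update hσi (h.outer_eq_none hij') hi'i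
    obtain ⟨p, hp, hgp⟩ := (h.evasive_inner i hσi).nonconstOn.exists_eq v
    have hclosed : update (ρ i) j (some (p j)) = fun j'' => some (p j'') := by
      funext j''
      by_cases hj : j'' = j
      · subst hj; simp
      · cases hρ : ρ i j'' with
        | none => exact absurd (hlast j'' hρ) hj
        | some b => simp [hj, hρ, hp j'' b hρ]
    refine ⟨p j, update σ i (some v), ⟨hv, fun k hk => ?_, fun k w hk => ?_⟩⟩
    · have hki : k ≠ i := by rintro rfl; simp at hk
      simp only [update_of_ne hki] at hk ⊢
      exact h.evasive_inner k hk
    · by_cases hki : k = i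
      · subst hki
        obtain rfl : v = w := by simpa using hk
        exact ⟨p, by simpa using hclosed, hgp⟩
      · simp only [update_of_ne hki] at hk ⊢
        exact h.closed k w hk

theorem evasive (h : BlockAdversary f g σ ρ) : Evasive (composeFun f g) (uncurry ρ) := by
  induction hn : freeCount (uncurry ρ) using Nat.strong_induction_on generalizing σ ρ with
  | _ n ih =>
  refine Evasive.intro h.nonconstOn fun ⟨i, j⟩ ⟨i', j'⟩ hij hij' hne => ?_
  obtain ⟨c, σ', h'⟩ := h.exists_update hij hij' hne
  refine ⟨c, ?_⟩
  rw [← uncurry_update_update]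
  refine ih _ ?_ h' rfl
  have := freeCount_update_add_one (ρ := uncurry ρ) hij c
  rw [uncurry_update_update]
  omega

end BlockAdversary

theorem Evasive.composeFun (hf : Evasive f fun _ => none) (hg : Evasive g fun _ => none) :
    Evasive (composeFun f g) fun _ => none :=
  BlockAdversary.evasive (σ := fun _ => none) (ρ := fun _ _ => none)
    ⟨hf, fun _ _ => hg, fun _ _ h => by simp at h⟩

end ComposeEvasive

section Savicky

set_option maxRecDepth 4000

def savickyFun (x : Fin 4 → Bool) : Bool :=
  !x 0 && ((!x 1 && !x 2) || (x 1 && !x 3) || (x 2 && x 3))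

def savickyCubes : List (Bool × (Fin 4 → Option Bool)) :=
  [(true, ![some false, some false, some false, none]),
   (false, ![some true, some false, some false, none]),
   (true, ![some false, some true, none, some false]),
   (false, ![some true, some true, none, some false]),
   (false, ![none, some false, some true, some false]),
   (false, ![none, some true, some false, some true]),
   (true, ![some false, none, some true, some true]),
   (false, ![some true, none, some true, some true])]

def savickyPartition : Set (Bool × (Fin 4 → Option Bool)) :=
  {p | p ∈ savickyCubes}

theorem covers_savickyPartition : Covers savickyPartition := by
  unfold Covers savickyPartition
  decide

theorem nonoverlapping_savickyPartition : Nonoverlapping savickyPartition := by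
  show ∀ x, ∀ p ∈ savickyCubes, ∀ q ∈ savickyCubes, InSubcube p.2 x → InSubcube q.2 x → p = q
  decide

theorem computes_savickyPartition : Computes savickyPartition savickyFun := by
  unfold Computes savickyPartition
  decide

theorem fixedCount_savickyPartition : ∀ p ∈ savickyPartition, fixedCount p.2 = 3 := by
  unfold savickyPartition
  decide

theorem evasive_savickyFun : Evasive savickyFun fun _ => none := by
  unfold Evasive
  decide

end Savicky

section SearchProblem

variable {ι : Type*} {n : ℕ} (e : ι ≃ Fin n) {P : Set (Bool × (ι → Option Bool))}

def toSearchProblem (P : Set (Bool × (ι → Option Bool))) : Set (Fin n → Option Bool) :=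
  (fun p => p.2 ∘ e.symm) '' P

theorem totalSP_toSearchProblem (hP : Covers P) : TotalSP (toSearchProblem e P) := by
  intro x
  obtain ⟨p, hp, hpx⟩ := hP (x ∘ e)
  exact ⟨_, ⟨p, hp, rfl⟩, (inSubcube_comp_symm e p.2 x).mpr hpx⟩

theorem uniqueSP_toSearchProblem (hP : Nonoverlapping P) : UniqueSP (toSearchProblem e P) := by
  rintro x _ ⟨p, hp, rfl⟩ _ ⟨q, hq, rfl⟩ hpx hqx
  rw [hP (x ∘ e) p hp q hq ((inSubcube_comp_symm e _ x).mp hpx)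
    ((inSubcube_comp_symm e _ x).mp hqx)]

theorem sW_toSearchProblem [Fintype ι] (hne : P.Nonempty) {S : ℕ}
    (hP : ∀ p ∈ P, fixedCount p.2 = S) : sW (toSearchProblem e P) = S := by
  have : wSize '' toSearchProblem e P = {S} := by
    obtain ⟨p, hp⟩ := hne
    refine Set.eq_singleton_iff_unique_mem.mpr ⟨⟨_, ⟨p, hp, rfl⟩, ?_⟩, ?_⟩
    · exact (fixedCount_comp_symm e p.2).trans (hP p hp)
    · rintro _ ⟨_, ⟨q, hq, rfl⟩, rfl⟩
      exact (fixedCount_comp_symm e q.2).trans (hP q hq)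
  rw [sW, this, csSup_singleton]

theorem le_DW_toSearchProblem [Fintype ι] [DecidableEq ι] (hP : Covers P) {F : (ι → Bool) → Bool}
    (hF : Computes P F) (hev : Evasive F fun _ => none) : n ≤ DW (toSearchProblem e P) := by
  refine le_DW_of_evasive (totalSP_toSearchProblem e hP) (f := fun x => F (x ∘ e)) ?_
    (hev.comp_symm e)
  rintro _ ⟨p, hp, rfl⟩ x y hx hy
  rw [hF p hp _ ((inSubcube_comp_symm e _ x).mp hx), hF p hp _ ((inSubcube_comp_symm e _ y).mp hy)]

end SearchProblem

section Tower

def Tower : ℕ → Type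
  | 0 => Fin 4
  | k + 1 => Fin 4 × Tower k

instance Tower.instDecidableEq : ∀ k, DecidableEq (Tower k)
  | 0 => inferInstanceAs (DecidableEq (Fin 4))
  | k + 1 =>
    haveI := Tower.instDecidableEq k
    inferInstanceAs (DecidableEq (Fin 4 × Tower k))

instance Tower.instFintype : ∀ k, Fintype (Tower k)
  | 0 => inferInstanceAs (Fintype (Fin 4))
  | k + 1 =>
    haveI := Tower.instFintype k
    inferInstanceAs (Fintype (Fin 4 × Tower k))

theorem Tower.card : ∀ k, Fintype.card (Tower k) = 4 ^ (k + 1)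
  | 0 => rfl
  | k + 1 => by
    rw [pow_succ', ← Tower.card k]
    exact Fintype.card_prod (Fin 4) (Tower k)

def towerPartition : ∀ k, Set (Bool × (Tower k → Option Bool))
  | 0 => savickyPartition
  | k + 1 => compose savickyPartition (towerPartition k)

def towerFun : ∀ k, (Tower k → Bool) → Bool
  | 0 => savickyFun
  | k + 1 => composeFun savickyFun (towerFun k)

theorem covers_towerPartition : ∀ k, Covers (towerPartition k)
  | 0 => covers_savickyPartition
  | k + 1 => covers_savickyPartition.compose (covers_towerPartition k)

theorem nonoverlapping_towerPartition : ∀ k, Nonoverlapping (towerPartition k)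
  | 0 => nonoverlapping_savickyPartition
  | k + 1 => nonoverlapping_savickyPartition.compose (covers_towerPartition k)
    (nonoverlapping_towerPartition k)

theorem computes_towerPartition : ∀ k, Computes (towerPartition k) (towerFun k)
  | 0 => computes_savickyPartition
  | k + 1 => computes_savickyPartition.compose (computes_towerPartition k)

theorem fixedCount_towerPartition : ∀ k, ∀ p ∈ towerPartition k, fixedCount p.2 = 3 ^ (k + 1)
  | 0 => fixedCount_savickyPartition
  | k + 1 => by
    rw [pow_succ']
    exact fixedCount_compose fixedCount_savickyPartition (fixedCount_towerPartition k)

theorem evasive_towerFun : ∀ k, Evasive (towerFun k) fun _ => none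
  | 0 => evasive_savickyFun
  | k + 1 => evasive_savickyFun.composeFun (evasive_towerFun k)

noncomputable def tuspFamily (k : ℕ) : Set (Fin (4 ^ (k + 1)) → Option Bool) :=
  toSearchProblem (Fintype.equivFinOfCardEq (Tower.card k)) (towerPartition k)

theorem totalSP_tuspFamily (k : ℕ) : TotalSP (tuspFamily k) :=
  totalSP_toSearchProblem _ (covers_towerPartition k)

theorem uniqueSP_tuspFamily (k : ℕ) : UniqueSP (tuspFamily k) :=
  uniqueSP_toSearchProblem _ (nonoverlapping_towerPartition k)

theorem sW_tuspFamily (k : ℕ) : sW (tuspFamily k) = 3 ^ (k + 1) := by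
  obtain ⟨p, hp, -⟩ := covers_towerPartition k fun _ => false
  exact sW_toSearchProblem _ ⟨p, hp⟩ (fixedCount_towerPartition k)

theorem le_DW_tuspFamily (k : ℕ) : 4 ^ (k + 1) ≤ DW (tuspFamily k) :=
  le_DW_toSearchProblem _ (covers_towerPartition k) (computes_towerPartition k)
    (evasive_towerFun k)

end Tower

theorem one_lt_logb_three_four : 1 < Real.logb 3 4 := by
  rw [Real.lt_logb_iff_rpow_lt (by norm_num) (by norm_num)]
  norm_num

theorem rpow_logb_three_four (k : ℕ) : ((3 : ℝ) ^ k) ^ Real.logb 3 4 = 4 ^ k := by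
  rw [← Real.rpow_natCast, ← Real.rpow_mul (by norm_num), mul_comm, Real.rpow_mul (by norm_num),
    Real.rpow_logb (by norm_num) (by norm_num) (by norm_num), Real.rpow_natCast]

theorem four_pow_log_le (N : ℕ) : 4 ^ (Nat.log 2 (N + 1) + 1) ≤ 4 * (N + 1) ^ 2 := by
  have h := Nat.pow_log_le_self 2 N.succ_ne_zero
  calc 4 ^ (Nat.log 2 (N + 1) + 1) = 4 * (2 ^ Nat.log 2 (N + 1)) ^ 2 := by
        rw [pow_succ', ← pow_mul, mul_comm _ 2, pow_mul]
        norm_num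
    _ ≤ 4 * (N + 1) ^ 2 := by gcongr

theorem lt_three_pow_log (N : ℕ) : N < 3 ^ (Nat.log 2 (N + 1) + 1) :=
  calc N < N + 1 := N.lt_succ_self
    _ < 2 ^ (Nat.log 2 (N + 1) + 1) := Nat.lt_pow_succ_log_self one_lt_two _
    _ ≤ 3 ^ (Nat.log 2 (N + 1) + 1) := Nat.pow_le_pow_left (by norm_num) _

/-- Savický, reformulated: There is a constant `α > 0` and a family of
total unique search problems `W_N ⊆ {0,1,*}^{m(N)}` with `m(N)` polynomially bounded
in `N`, such that for all sufficiently large `N`, `D(W_N) ≥ s(W_N)^{1+α}` and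
`s(W_N) ≥ N`. -/
theorem exists_tusp_family :
    ∃ α : ℝ, 0 < α ∧
      ∃ (m : ℕ → ℕ) (W : (N : ℕ) → Set (Fin (m N) → Option Bool)),
        (∃ a b : ℕ, ∀ N : ℕ, m N ≤ a * (N + 1) ^ b) ∧
        (∀ N : ℕ, TotalSP (W N) ∧ UniqueSP (W N)) ∧
        ∃ N₀ : ℕ, ∀ N : ℕ, N₀ ≤ N →
          ((sW (W N) : ℝ) ^ ((1 : ℝ) + α) ≤ (DW (W N) : ℝ)) ∧ N ≤ sW (W N) := by
  refine ⟨Real.logb 3 4 - 1, by linarith [one_lt_logb_three_four],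
    fun N => 4 ^ (Nat.log 2 (N + 1) + 1), fun N => tuspFamily (Nat.log 2 (N + 1)),
    ⟨4, 2, four_pow_log_le⟩, fun N => ⟨totalSP_tuspFamily _, uniqueSP_tuspFamily _⟩, 0,
    fun N _ => ?_⟩
  rw [sW_tuspFamily, add_sub_cancel]
  refine ⟨?_, (lt_three_pow_log N).le⟩
  calc (((3 ^ (Nat.log 2 (N + 1) + 1) : ℕ) : ℝ)) ^ Real.logb 3 4
      = ((4 ^ (Nat.log 2 (N + 1) + 1) : ℕ) : ℝ) := by
        push_cast
        exact rpow_logb_three_four _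
    _ ≤ DW (tuspFamily (Nat.log 2 (N + 1))) := by exact_mod_cast le_DW_tuspFamily _
end

section
/- There exists a family of Boolean functions {G_i : {0,1}^{4^i} → {0,1}}, indexed by positive integers i, such that (i) both G_i and its negation have unambiguous DNF representations in which every clause contains at most 3^i literals, and (ii) the decision tree depth complexity satisfies D(G_i) ≥ (4^i + 2)/3, which is Ω((3^i)^γ) for γ = log_3(4) > 1. -/
/-- `D(f)`: the minimum depth of a decision tree computing `f`. -/
noncomputable def queryComplexity {n : ℕ} {β : Type} (f : (Fin n → Bool) → β) : ℕ :=
  sInf {d | ∃ T : DTree n β, T.depth ≤ d ∧ ∀ x : Fin n → Bool, T.eval x = f x}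

/-- The set `Cs` of clauses (each clause being a partial assignment, satisfied by `x`
exactly when it agrees with `x`) is an unambiguous DNF representation of `f`:
`f x = 1` iff some clause is satisfied by `x`, and every input satisfies at most one
clause. -/
def IsUDNF {n : ℕ} (f : (Fin n → Bool) → Bool) (Cs : Set (Fin n → Option Bool)) : Prop :=
  (∀ x : Fin n → Bool, f x = true ↔ ∃ c ∈ Cs, Agrees c x) ∧
  (∀ x : Fin n → Bool, ∀ c ∈ Cs, ∀ c' ∈ Cs, Agrees c x → Agrees c' x → c = c')


/-!
Take `G₀ x = x₀` and `Gᵢ₊₁ = g ∘ (Gᵢ, Gᵢ, Gᵢ, Gᵢ)` on four blocks of the input, where `g` is a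
4-bit function such that `g` and `¬g` have unambiguous DNFs of width `3`. Substituting, into a
clause of `g`, a clause of `Gᵢ` for each block it mentions gives unambiguous DNFs for `Gᵢ₊₁`
and `¬Gᵢ₊₁`, and multiplies widths: hence width `3^i`.

`g` is evasive, and evasiveness survives block composition: the adversary answers inside a
block as the inner adversary does until the last bit of the block is queried, and answers that
bit so that the block takes the value the outer adversary gives to its coordinate. So
`D(Gᵢ) = 4^i ≥ (4^i + 2)/3`.
-/

open Finset Function

instance {n : ℕ} (w : Fin n → Option Bool) (x : Fin n → Bool) : Decidable (Agrees w x) :=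
  inferInstanceAs (Decidable (∀ (i : Fin n) (b : Bool), w i = some b → x i = b))

section PartialAssignments

variable {n : ℕ}

lemma wSize_none : wSize (fun _ : Fin n => (none : Option Bool)) = 0 := by
  simp [wSize]

lemma wSize_lt_of_eq_none {ρ : Fin n → Option Bool} {k : Fin n} (hk : ρ k = none) :
    wSize ρ < n := by
  simpa [wSize] using Finset.card_lt_univ_of_notMem (x := k) (by simp [hk])

lemma wSize_update_of_eq_none {ρ : Fin n → Option Bool} {k : Fin n} (hk : ρ k = none)
    (b : Bool) : wSize (update ρ k (some b)) = wSize ρ + 1 := by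
  have hset : univ.filter (fun i => (update ρ k (some b) i).isSome) =
      insert k (univ.filter fun i => (ρ i).isSome) := by
    ext i
    by_cases hik : i = k
    · subst hik; simp
    · simp [hik]
  rw [wSize, hset, card_insert_of_notMem (by simp [hk]), wSize]

lemma agrees_update_iff {ρ : Fin n → Option Bool} {k : Fin n} (hk : ρ k = none) {b : Bool}
    {x : Fin n → Bool} : Agrees (update ρ k (some b)) x ↔ Agrees ρ x ∧ x k = b := by
  constructor
  · intro h
    refine ⟨fun i c hi => h i c ?_, h k b (update_self ..)⟩
    rwa [update_of_ne (by rintro rfl; simp [hk] at hi)]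
  · rintro ⟨h, hxk⟩ i c hi
    by_cases hik : i = k
    · subst hik; simp_all
    · exact h i c (by rwa [update_of_ne hik] at hi)

lemma sum_ite_isSome (c : Fin n → Option Bool) (a : ℕ) :
    ∑ j, (if (c j).isSome then a else 0) = wSize c * a := by
  rw [← sum_filter, sum_const, smul_eq_mul, wSize]

end PartialAssignments

theorem DTree.exists_eval_eq {n : ℕ} {β : Type} (f : (Fin n → Bool) → β) :
    ∃ T : DTree n β, ∀ x, T.eval x = f x := by
  suffices h : ∀ (s : Finset (Fin n)) (f : (Fin n → Bool) → β),
      (∀ x y, (∀ k ∈ s, x k = y k) → f x = f y) → ∃ T : DTree n β, ∀ x, T.eval x = f x from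
    h univ f fun x y hxy => congrArg f (funext fun k => hxy k (mem_univ k))
  intro s
  induction s using Finset.induction_on with
  | empty => exact fun f hf => ⟨.leaf (f fun _ => false), fun x => hf _ _ (by simp)⟩
  | insert k s _ ih =>
    intro f hf
    have hrestrict (b : Bool) : ∃ T : DTree n β, ∀ x, T.eval x = f (update x k b) := by
      refine ih _ fun x y hxy => hf _ _ fun l hl => ?_
      by_cases hlk : l = k
      · subst hlk; simp
      · simp [update_of_ne hlk, hxy l ((mem_insert.1 hl).resolve_left hlk)]
    obtain ⟨T₀, hT₀⟩ := hrestrict false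
    obtain ⟨T₁, hT₁⟩ := hrestrict true
    refine ⟨.node k T₀ T₁, fun x => ?_⟩
    have hx : f (update x k (x k)) = f x := by rw [update_eq_self]
    cases hxk : x k <;> simp_all [DTree.eval]

section Adversary

variable {n : ℕ}

/-- `P` is the set of partial assignments reachable by an adversary that keeps `f` undetermined
until the last bit is queried. -/
structure IsAdversary (f : (Fin n → Bool) → Bool) (P : (Fin n → Option Bool) → Prop) :
    Prop where
  empty : P fun _ => none
  nonconst : ∀ ρ, P ρ → ∀ b, ∃ x, Agrees ρ x ∧ f x = b
  extend : ∀ ρ k, P ρ → ρ k = none → wSize ρ + 2 ≤ n → ∃ b, P (update ρ k (some b))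

variable {f : (Fin n → Bool) → Bool} {P : (Fin n → Option Bool) → Prop}

theorem IsAdversary.le_depth_add_wSize (hP : IsAdversary f P) (T : DTree n Bool) :
    ∀ ρ, P ρ → (∀ x, Agrees ρ x → T.eval x = f x) → n ≤ T.depth + wSize ρ := by
  induction T with
  | leaf b =>
    intro ρ hρ hT
    obtain ⟨x, hx, hfx⟩ := hP.nonconst ρ hρ (!b)
    simpa [DTree.eval, hfx] using hT x hx
  | node k T₀ T₁ ih₀ ih₁ =>
    intro ρ hρ hT
    have ih (b : Bool) (ρ' : Fin n → Option Bool) (hρ' : P ρ')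
        (hsub : ∀ x, Agrees ρ' x → Agrees ρ x ∧ x k = b) :
        n ≤ (cond b T₁ T₀).depth + wSize ρ' := by
      cases b
      · exact ih₀ ρ' hρ' fun x hx => by simpa [DTree.eval, (hsub x hx).2] using hT x (hsub x hx).1
      · exact ih₁ ρ' hρ' fun x hx => by simpa [DTree.eval, (hsub x hx).2] using hT x (hsub x hx).1
    have hdepth (b : Bool) : (cond b T₁ T₀).depth + 1 ≤ (DTree.node k T₀ T₁).depth := by
      cases b <;> simp only [DTree.depth, cond] <;> omega
    cases hk : ρ k with
    | some b =>
      have := ih b ρ hρ fun x hx => ⟨hx, hx k b hk⟩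
      have := hdepth b
      omega
    | none =>
      by_cases hroom : wSize ρ + 2 ≤ n
      · obtain ⟨b, hb⟩ := hP.extend ρ k hρ hk hroom
        have hb' := ih b _ hb fun x hx => (agrees_update_iff hk).1 hx
        rw [wSize_update_of_eq_none hk] at hb'
        have := hdepth b
        omega
      · have := hdepth false
        omega

theorem IsAdversary.le_queryComplexity (hP : IsAdversary f P) : n ≤ queryComplexity f := by
  obtain ⟨T, hT⟩ := DTree.exists_eval_eq f
  refine le_csInf ⟨T.depth, T, le_rfl, hT⟩ ?_
  rintro d ⟨T, hTd, hT⟩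
  have := hP.le_depth_add_wSize T _ hP.empty fun x _ => hT x
  rw [wSize_none] at this
  omega

lemma IsAdversary.pos (hP : IsAdversary f P) : 0 < n := by
  refine Nat.pos_of_ne_zero fun hn => ?_
  subst hn
  obtain ⟨x, -, hx⟩ := hP.nonconst _ hP.empty true
  obtain ⟨y, -, hy⟩ := hP.nonconst _ hP.empty false
  simp [Subsingleton.elim x y, hy] at hx

lemma isAdversary_of_le_one (hn : n ≤ 1) (hf : ∀ b, ∃ x, f x = b) :
    IsAdversary f (· = fun _ => none) where
  empty := rfl
  nonconst := by
    rintro _ rfl b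
    obtain ⟨x, hx⟩ := hf b
    exact ⟨x, by simp [Agrees], hx⟩
  extend _ _ _ _ h := by omega

end Adversary

section Blocks

variable {m n N : ℕ} (e : Fin N ≃ Fin m × Fin n) {α : Type*}

def block (x : Fin N → α) (j : Fin m) : Fin n → α := fun t => x (e.symm (j, t))

def unblock (xs : Fin m → Fin n → α) : Fin N → α := fun k => xs (e k).1 (e k).2

@[simp]
lemma block_unblock (xs : Fin m → Fin n → α) : block e (unblock e xs) = xs := by
  ext j t
  simp [block, unblock]

lemma block_injective : Injective (block (α := α) e) := by
  intro x y h
  ext k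
  simpa [block] using congrFun (congrFun h (e k).1) (e k).2

lemma block_update_self (x : Fin N → α) (j : Fin m) (t : Fin n) (v : α) :
    block e (update x (e.symm (j, t)) v) j = update (block e x j) t v := by
  ext s
  by_cases hst : s = t
  · subst hst; simp [block]
  · simp [block, hst]

lemma block_update_of_ne (x : Fin N → α) {j j' : Fin m} (h : j' ≠ j) (t : Fin n) (v : α) :
    block e (update x (e.symm (j, t)) v) j' = block e x j' := by
  ext s
  simp [block, h]

lemma agrees_iff_forall_block {ρ : Fin N → Option Bool} {x : Fin N → Bool} :
    Agrees ρ x ↔ ∀ j, Agrees (block e ρ j) (block e x j) := by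
  refine ⟨fun h j t => h _, fun h k b hk => ?_⟩
  simpa [block] using h (e k).1 (e k).2 b (by simpa [block] using hk)

lemma wSize_eq_sum_block (ρ : Fin N → Option Bool) : wSize ρ = ∑ j, wSize (block e ρ j) := by
  simp only [wSize, card_filter]
  rw [← e.symm.sum_comp, Fintype.sum_prod_type]
  rfl

def blockComp (f : (Fin m → Bool) → Bool) (g : (Fin n → Bool) → Bool) (x : Fin N → Bool) :
    Bool :=
  f fun j => g (block e x j)

end Blocks

section UDNF

variable {m n N : ℕ} (e : Fin N ≃ Fin m × Fin n)

/-- The case `b = false` is about `¬f`. -/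
def HasUDNFWidth (f : (Fin n → Bool) → Bool) (w : ℕ) : Prop :=
  ∀ b, ∃ Cs, IsUDNF (fun x => f x == b) Cs ∧ ∀ c ∈ Cs, 1 ≤ wSize c ∧ wSize c ≤ w

/-- The clause of `f ∘ (g, …, g)` built from a clause `c` of `f` and clauses `subs j` of `g`
for the blocks `j` that `c` mentions. -/
def glue (c : Fin m → Option Bool) (subs : Fin m → Fin n → Option Bool) : Fin N → Option Bool :=
  unblock e fun j => if (c j).isSome then subs j else fun _ => none

def glueClauses (Cf : Set (Fin m → Option Bool)) (Cg : Bool → Set (Fin n → Option Bool)) :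
    Set (Fin N → Option Bool) :=
  {C | ∃ c ∈ Cf, ∃ subs : Fin m → Fin n → Option Bool,
    (∀ j b, c j = some b → subs j ∈ Cg b) ∧ C = glue e c subs}

variable {c : Fin m → Option Bool} {subs : Fin m → Fin n → Option Bool}

lemma agrees_glue_iff {x : Fin N → Bool} :
    Agrees (glue e c subs) x ↔ ∀ j b, c j = some b → Agrees (subs j) (block e x j) := by
  rw [glue, agrees_iff_forall_block, block_unblock]
  refine forall_congr' fun j => ⟨fun h b hb => by simpa [hb] using h, fun h => ?_⟩
  cases hj : c j with
  | none => simp [Agrees]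
  | some b => simpa using h b hj

lemma wSize_glue : wSize (glue e c subs) = ∑ j, if (c j).isSome then wSize (subs j) else 0 := by
  rw [wSize_eq_sum_block, glue, block_unblock]
  refine sum_congr rfl fun j _ => ?_
  split_ifs <;> simp [wSize_none]

variable {f : (Fin m → Bool) → Bool} {g : (Fin n → Bool) → Bool}
  {Cf : Set (Fin m → Option Bool)} {Cg : Bool → Set (Fin n → Option Bool)}

lemma agrees_of_agrees_glue (hg : ∀ b, IsUDNF (fun x => g x == b) (Cg b))
    (hsubs : ∀ j b, c j = some b → subs j ∈ Cg b) {x : Fin N → Bool}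
    (hx : Agrees (glue e c subs) x) : Agrees c fun j => g (block e x j) := fun j b hj => by
  simpa using ((hg b).1 _).2 ⟨subs j, hsubs j b hj, (agrees_glue_iff e).1 hx j b hj⟩

theorem isUDNF_blockComp {b : Bool} (hf : IsUDNF (fun y => f y == b) Cf)
    (hg : ∀ b, IsUDNF (fun x => g x == b) (Cg b)) :
    IsUDNF (fun x => blockComp e f g x == b) (glueClauses e Cf Cg) := by
  refine ⟨fun x => ⟨fun hx => ?_, ?_⟩, ?_⟩
  · obtain ⟨c, hc, hcx⟩ := (hf.1 _).1 hx
    have hsub (j : Fin m) : ∃ s : Fin n → Option Bool,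
        ∀ b, c j = some b → s ∈ Cg b ∧ Agrees s (block e x j) := by
      cases hj : c j with
      | none => exact ⟨fun _ => none, by simp⟩
      | some b => simpa using (hg b).1 (block e x j) |>.1 (by simpa using hcx j b hj)
    choose subs hsubs using hsub
    exact ⟨glue e c subs, ⟨c, hc, subs, fun j b hj => (hsubs j b hj).1, rfl⟩,
      (agrees_glue_iff e).2 fun j b hj => (hsubs j b hj).2⟩
  · rintro ⟨_, ⟨c, hc, subs, hsubs, rfl⟩, hx⟩
    exact (hf.1 _).2 ⟨c, hc, agrees_of_agrees_glue e hg hsubs hx⟩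
  · rintro x _ ⟨c, hc, subs, hsubs, rfl⟩ _ ⟨c', hc', subs', hsubs', rfl⟩ hx hx'
    obtain rfl : c = c' := hf.2 _ c hc c' hc' (agrees_of_agrees_glue e hg hsubs hx)
      (agrees_of_agrees_glue e hg hsubs' hx')
    refine block_injective e (funext fun j => ?_)
    simp only [glue, block_unblock]
    split_ifs with hj
    · obtain ⟨b, hb⟩ := Option.isSome_iff_exists.1 hj
      rw [(hg b).2 (block e x j) _ (hsubs j b hb) _ (hsubs' j b hb)
        ((agrees_glue_iff e).1 hx j b hb) ((agrees_glue_iff e).1 hx' j b hb)]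
    · rfl

lemma wSize_mem_glueClauses {wf wg : ℕ} (hf : ∀ c ∈ Cf, 1 ≤ wSize c ∧ wSize c ≤ wf)
    (hg : ∀ b, ∀ c ∈ Cg b, 1 ≤ wSize c ∧ wSize c ≤ wg) :
    ∀ C ∈ glueClauses e Cf Cg, 1 ≤ wSize C ∧ wSize C ≤ wf * wg := by
  rintro _ ⟨c, hc, subs, hsubs, rfl⟩
  have hwsub (j : Fin m) (hj : (c j).isSome) : 1 ≤ wSize (subs j) ∧ wSize (subs j) ≤ wg := by
    obtain ⟨b, hb⟩ := Option.isSome_iff_exists.1 hj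
    exact hg b _ (hsubs j b hb)
  rw [wSize_glue]
  constructor
  · obtain ⟨j, hj⟩ : ∃ j, (c j).isSome := by
      by_contra! h
      simpa [wSize, h] using (hf c hc).1
    calc 1 ≤ if (c j).isSome then wSize (subs j) else 0 := by simp [hj, (hwsub j hj).1]
      _ ≤ _ := single_le_sum (f := fun j => if (c j).isSome then wSize (subs j) else 0)
          (fun _ _ => Nat.zero_le _) (mem_univ j)
  · calc ∑ j, (if (c j).isSome then wSize (subs j) else 0)
        ≤ ∑ j, if (c j).isSome then wg else 0 :=
          sum_le_sum fun j _ => by split_ifs with hj; exacts [(hwsub j hj).2, le_rfl]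
      _ = wSize c * wg := sum_ite_isSome c wg
      _ ≤ wf * wg := Nat.mul_le_mul_right _ (hf c hc).2

theorem HasUDNFWidth.blockComp {wf wg : ℕ} (hf : HasUDNFWidth f wf) (hg : HasUDNFWidth g wg) :
    HasUDNFWidth (blockComp e f g) (wf * wg) := by
  choose Cg hCg hwg using hg
  intro b
  obtain ⟨Cf, hCf, hwf⟩ := hf b
  exact ⟨glueClauses e Cf Cg, isUDNF_blockComp e hCf hCg, wSize_mem_glueClauses e hwf hwg⟩

end UDNF

section AdversaryComp

variable {m n N : ℕ} (e : Fin N ≃ Fin m × Fin n) (Q : (Fin m → Option Bool) → Prop)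
  (P : (Fin n → Option Bool) → Prop) (g : (Fin n → Bool) → Bool)

/-- A block whose value is not yet revealed (`none`) is played by the inner adversary and
still has a free bit; a block revealed with value `b` is completely queried and `g` is `b`
on it. -/
def BlockState : Option Bool → (Fin n → Option Bool) → Prop
  | none, σ => P σ ∧ wSize σ < n
  | some b, σ => wSize σ = n ∧ ∃ x, Agrees σ x ∧ g x = b

def compAdversary (ρ : Fin N → Option Bool) : Prop :=
  ∃ com, Q com ∧ ∀ j, BlockState P g (com j) (block e ρ j)

variable {e Q P g} {f : (Fin m → Bool) → Bool}

lemma compAdversary_empty (hQ : IsAdversary f Q) (hP : IsAdversary g P) :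
    compAdversary e Q P g fun _ => none :=
  ⟨_, hQ.empty, fun _ => ⟨hP.empty, wSize_none (n := n) ▸ hP.pos⟩⟩

lemma compAdversary_nonconst (hQ : IsAdversary f Q) (hP : IsAdversary g P)
    {ρ : Fin N → Option Bool} (hρ : compAdversary e Q P g ρ) (b : Bool) :
    ∃ x, Agrees ρ x ∧ blockComp e f g x = b := by
  obtain ⟨com, hcom, hblocks⟩ := hρ
  obtain ⟨y, hy, hfy⟩ := hQ.nonconst com hcom b
  have hblock (j : Fin m) : ∃ xj, Agrees (block e ρ j) xj ∧ g xj = y j := by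
    have := hblocks j
    cases hj : com j with
    | none => rw [hj] at this; exact hP.nonconst _ this.1 (y j)
    | some c => rw [hj] at this; rw [hy j c hj]; exact this.2
  choose xs hxs hgxs using hblock
  refine ⟨unblock e xs, (agrees_iff_forall_block e).2 ?_, ?_⟩
  · simpa using hxs
  · simp [blockComp, hgxs, hfy]

/-- Free blocks contribute at least `n - 1` bits each and revealed ones `n`; so while two bits of
`ρ` are free and a free block has only one, fewer than `m - 1` blocks are revealed. -/
lemma wSize_add_two_le_of_blockState {ρ : Fin N → Option Bool} {com : Fin m → Option Bool}
    (hblocks : ∀ j, BlockState P g (com j) (block e ρ j)) (hroom : wSize ρ + 2 ≤ N)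
    {j : Fin m} (hj : com j = none) (hlast : n ≤ wSize (block e ρ j) + 1) :
    wSize com + 2 ≤ m := by
  have hN : N = m * n := by simpa using Fintype.card_congr e
  have hblock (j' : Fin m) : (if (com j').isSome then n else 0) + (if j' = j then n - 1 else 0)
      ≤ wSize (block e ρ j') := by
    have := hblocks j'
    by_cases hj' : j' = j
    · subst hj'; simpa [hj] using Nat.sub_le_of_le_add hlast
    · cases hcj : com j' with
      | none => simp [hj']
      | some b => rw [hcj] at this; simp [hj', this.1]
  have hsum := sum_le_sum fun j' (_ : j' ∈ univ) => hblock j'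
  rw [sum_add_distrib, sum_ite_isSome, sum_ite_eq' univ j, if_pos (mem_univ j),
    ← wSize_eq_sum_block] at hsum
  have : (wSize com + 1) * n < m * n := by rw [add_mul]; omega
  have := lt_of_mul_lt_mul_right this (Nat.zero_le n)
  omega

lemma compAdversary_update {ρ : Fin N → Option Bool} {com : Fin m → Option Bool}
    (hblocks : ∀ j, BlockState P g (com j) (block e ρ j)) {j : Fin m} {t : Fin n} {v : Option Bool}
    {o : Option Bool} (ho : Q (update com j o))
    (hnew : BlockState P g o (update (block e ρ j) t v)) :
    compAdversary e Q P g (update ρ (e.symm (j, t)) v) := by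
  refine ⟨_, ho, fun j' => ?_⟩
  by_cases hj' : j' = j
  · subst hj'; simpa [block_update_self] using hnew
  · simpa [block_update_of_ne e ρ hj', hj'] using hblocks j'

lemma compAdversary_extend (hQ : IsAdversary f Q) (hP : IsAdversary g P)
    {ρ : Fin N → Option Bool} (hρ : compAdversary e Q P g ρ) {k : Fin N} (hk : ρ k = none)
    (hroom : wSize ρ + 2 ≤ N) : ∃ b, compAdversary e Q P g (update ρ k (some b)) := by
  obtain ⟨com, hcom, hblocks⟩ := hρ
  obtain ⟨j, t, rfl⟩ : ∃ j t, k = e.symm (j, t) := ⟨(e k).1, (e k).2, by simp⟩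
  have hjt : block e ρ j t = none := hk
  have hstate := hblocks j
  cases hj : com j with
  | some c =>
    rw [hj] at hstate
    exact absurd hstate.1 (wSize_lt_of_eq_none hjt).ne
  | none =>
    rw [hj] at hstate
    obtain ⟨hPj, hlt⟩ := hstate
    by_cases hroomj : wSize (block e ρ j) + 2 ≤ n
    · obtain ⟨b, hb⟩ := hP.extend _ t hPj hjt hroomj
      refine ⟨b, compAdversary_update hblocks (o := none) (by rwa [← hj, update_eq_self]) ?_⟩
      exact ⟨hb, by rw [wSize_update_of_eq_none hjt]; omega⟩
    · obtain ⟨c, hc⟩ := hQ.extend com j hcom hj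
        (wSize_add_two_le_of_blockState hblocks hroom hj (by omega))
      obtain ⟨x, hx, hgx⟩ := hP.nonconst _ hPj c
      refine ⟨x t, compAdversary_update hblocks hc ⟨?_, x, ?_, hgx⟩⟩
      · rw [wSize_update_of_eq_none hjt]; omega
      · exact (agrees_update_iff hjt).2 ⟨hx, rfl⟩

theorem IsAdversary.blockComp (hQ : IsAdversary f Q) (hP : IsAdversary g P) :
    IsAdversary (blockComp e f g) (compAdversary e Q P g) where
  empty := compAdversary_empty hQ hP
  nonconst _ hρ := compAdversary_nonconst hQ hP hρ
  extend _ _ hρ hk hroom := compAdversary_extend hQ hP hρ hk hroom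

end AdversaryComp

section Gadget

def gadget (y : Fin 4 → Bool) : Bool :=
  if y 0 then !y 1 && !y 2 && !y 3 else !(y 1 && y 2 && y 3)

def gadgetClauses : Bool → List (Fin 4 → Option Bool)
  | true => [![none, some false, some false, some false],
             ![some false, some false, none, some true],
             ![some false, none, some true, some false],
             ![some false, some true, some false, none]]
  | false => [![none, some true, some true, some true],
              ![some true, some true, none, some false],
              ![some true, none, some false, some true],
              ![some true, some false, some true, none]]

def gadgetAdversary (ρ : Fin 4 → Option Bool) : Prop :=
  (wSize ρ ≤ 2 ∧ ∃ a, Agrees ρ ![a, !a, !a, !a]) ∨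
    (wSize ρ = 3 ∧ ∀ b, ∃ y, Agrees ρ y ∧ gadget y = b)

instance : DecidablePred gadgetAdversary := fun ρ => by
  unfold gadgetAdversary; infer_instance

lemma hasUDNFWidth_gadget : HasUDNFWidth gadget 3 := by
  have hrep : ∀ b (y : Fin 4 → Bool),
      (gadget y == b) = true ↔ ∃ c ∈ gadgetClauses b, Agrees c y := by decide
  have hunamb : ∀ b, ∀ c ∈ gadgetClauses b, ∀ c' ∈ gadgetClauses b, ∀ y : Fin 4 → Bool,
      Agrees c y → Agrees c' y → c = c' := by decide
  have hwidth : ∀ b, ∀ c ∈ gadgetClauses b, 1 ≤ wSize c ∧ wSize c ≤ 3 := by decide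
  exact fun b => ⟨{c | c ∈ gadgetClauses b},
    ⟨hrep b, fun y c hc c' hc' => hunamb b c hc c' hc' y⟩, hwidth b⟩

lemma isAdversary_gadget : IsAdversary gadget gadgetAdversary :=
  ⟨by decide, by decide, by decide⟩

end Gadget

def blockEquiv (i : ℕ) : Fin (4 ^ (i + 1)) ≃ Fin 4 × Fin (4 ^ i) :=
  (finCongr (pow_succ' 4 i)).trans finProdFinEquiv.symm

def iteratedGadget : (i : ℕ) → (Fin (4 ^ i) → Bool) → Bool
  | 0 => fun x => x 0
  | i + 1 => blockComp (blockEquiv i) gadget (iteratedGadget i)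

lemma hasUDNFWidth_iteratedGadget (i : ℕ) : HasUDNFWidth (iteratedGadget i) (3 ^ i) := by
  induction i with
  | zero =>
    have h0 (k : Fin (4 ^ 0)) : k = 0 := Fin.fin_one_eq_zero k
    refine fun b => ⟨{fun _ => some b}, ⟨fun x => ?_, by simp⟩, by simp [wSize]⟩
    simp only [iteratedGadget, beq_iff_eq, Set.mem_singleton_iff, exists_eq_left, Agrees,
      Option.some.injEq]
    exact ⟨fun h k b' hb' => hb' ▸ h0 k ▸ h, fun h => h 0 b rfl⟩
  | succ i ih =>
    show HasUDNFWidth (blockComp _ _ _) _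
    rw [pow_succ' 3 i]
    exact hasUDNFWidth_gadget.blockComp (blockEquiv i) ih

lemma isAdversary_iteratedGadget (i : ℕ) : ∃ P, IsAdversary (iteratedGadget i) P := by
  induction i with
  | zero => exact ⟨_, isAdversary_of_le_one (by simp) fun b => ⟨fun _ => b, rfl⟩⟩
  | succ i ih =>
    obtain ⟨P, hP⟩ := ih
    exact ⟨_, isAdversary_gadget.blockComp (e := blockEquiv i) hP⟩

/-- Savický: There is a family of Boolean functions
`G_i : {0,1}^{4^i} → {0,1}` such that both `G_i` and its negation have unambiguous
DNF representations whose clauses each have between `1` and `3^i` literals, and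
`D(G_i) ≥ (4^i + 2)/3` (stated as `4^i + 2 ≤ 3 · D(G_i)`). -/
theorem savicky :
    ∃ G : (i : ℕ) → (Fin (4 ^ i) → Bool) → Bool,
      ∀ i : ℕ, 1 ≤ i →
        (∃ Cs : Set (Fin (4 ^ i) → Option Bool),
          IsUDNF (G i) Cs ∧ ∀ c ∈ Cs, 1 ≤ wSize c ∧ wSize c ≤ 3 ^ i) ∧
        (∃ Cs : Set (Fin (4 ^ i) → Option Bool),
          IsUDNF (fun x => !(G i x)) Cs ∧ ∀ c ∈ Cs, 1 ≤ wSize c ∧ wSize c ≤ 3 ^ i) ∧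
        4 ^ i + 2 ≤ 3 * queryComplexity (G i) := by
  refine ⟨iteratedGadget, fun i _ => ?_⟩
  obtain ⟨C₁, hC₁, hw₁⟩ := hasUDNFWidth_iteratedGadget i true
  obtain ⟨C₀, hC₀, hw₀⟩ := hasUDNFWidth_iteratedGadget i false
  simp only [beq_true, beq_false] at hC₁ hC₀
  obtain ⟨P, hP⟩ := isAdversary_iteratedGadget i
  have hD := hP.le_queryComplexity
  have hpos := Nat.one_le_pow i 4 (by norm_num)
  exact ⟨⟨C₁, hC₁, hw₁⟩, ⟨C₀, hC₀, hw₀⟩, by omega⟩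
end

section
/- Let m, d, t be positive integers with t < m. If 2^m · d · (1 − 1/d)^{2^{m−t}} < 1, then there exists an (m, d, t)-weak exposure-resilient function J : {0,1}^m → [d]. (In particular, for the parameters arising from the paper's TUSP family, for all sufficiently large N there exists a (⌊s^{1+α/2}⌋, D^2, ⌊(1/2)s^{1+α/2}⌋)-wERF whenever D ≥ s^{1+α} and s ≥ N.) -/
/-- `J : {0,1}^m → [d]` is an `(m, d, t)`-weak exposure-resilient function: for every
target value `c` and every set `S` of at most `t` coordinates, some preimage of `c`
is all-zero on `S`. -/
def IsWERF (m d t : ℕ) (J : (Fin m → Bool) → Fin d) : Prop :=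
  ∀ c : Fin d, ∀ S : Finset (Fin m), S.card ≤ t →
    ∃ b : Fin m → Bool, J b = c ∧ ∀ i ∈ S, b i = false

/-!
Union bound over a uniformly random `J`. For a target `c` and a set `S` of at most `t`
coordinates, the strings vanishing on `S` number at least `2^(m-t)`, and `J` misses `c` on all
of them with probability `(1 - 1/d)^(2^(m-t))`. There are at most `d · 2^m` pairs `(c, S)`, so
the hypothesis makes the probability that some pair fails less than one.
-/

open Finset

section Counting

variable {α β : Type*} [Fintype α] [DecidableEq α] [Fintype β]

theorem card_filter_forall_mem (A : Finset α) (T : Finset β)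
    [DecidablePred fun f : α → β => ∀ a ∈ A, f a ∈ T] :
    #{f : α → β | ∀ a ∈ A, f a ∈ T} =
      #T ^ #A * Fintype.card β ^ (Fintype.card α - #A) := by
  have hpi : ({f : α → β | ∀ a ∈ A, f a ∈ T} : Finset (α → β)) =
      Fintype.piFinset fun a => if a ∈ A then T else univ := by
    ext f
    simp only [mem_filter, mem_univ, true_and, Fintype.mem_piFinset]
    refine forall_congr' fun a => ?_
    split_ifs <;> simp [*]
  rw [hpi, Fintype.card_piFinset]
  simp only [apply_ite card, prod_ite, prod_const, card_univ]
  rw [filter_mem_eq_inter, univ_inter, filter_not, filter_mem_eq_inter, univ_inter,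
    card_sdiff_of_subset (subset_univ A), card_univ]

theorem card_filter_forall_eq (A : Finset α) (y : β)
    [DecidablePred fun f : α → β => ∀ a ∈ A, f a = y] :
    #{f : α → β | ∀ a ∈ A, f a = y} = Fintype.card β ^ (Fintype.card α - #A) := by
  classical
  simpa using card_filter_forall_mem A {y}

theorem card_filter_forall_ne (A : Finset α) (c : β)
    [DecidablePred fun f : α → β => ∀ a ∈ A, f a ≠ c] :
    (#{f : α → β | ∀ a ∈ A, f a ≠ c} : ℝ) =
      Fintype.card β ^ Fintype.card α * (1 - 1 / Fintype.card β) ^ #A := by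
  have hA : #A ≤ Fintype.card α := card_le_univ A
  have hβ : 0 < Fintype.card β := Fintype.card_pos_iff.2 ⟨c⟩
  classical
  have := card_filter_forall_mem A ({c}ᶜ : Finset β)
  simp only [mem_compl, mem_singleton, card_compl, card_singleton] at this
  rw [this, Nat.cast_mul, Nat.cast_pow, Nat.cast_pow, Nat.cast_sub hβ,
    Nat.cast_one, one_sub_div (by positivity), div_pow, ← pow_sub_mul_pow _ hA]
  field_simp

end Counting

theorem exists_forall_notMem_of_card_mul_lt {ι X : Type*} [Fintype X] (P : Finset ι)
    (bad : ι → Finset X) (B : ℝ) (hbad : ∀ i ∈ P, (#(bad i) : ℝ) ≤ B)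
    (h : #P * B < Fintype.card X) :
    ∃ x, ∀ i ∈ P, x ∉ bad i := by
  classical
  by_contra! hcover
  have hunion : univ ⊆ P.biUnion bad := fun x _ => mem_biUnion.2 (hcover x)
  have : (Fintype.card X : ℝ) ≤ #P * B := calc
    (Fintype.card X : ℝ) ≤ #(P.biUnion bad) := by exact_mod_cast card_le_card hunion
    _ ≤ ∑ i ∈ P, (#(bad i) : ℝ) := by exact_mod_cast card_biUnion_le
    _ ≤ #P * B := by simpa using sum_le_card_nsmul P _ _ hbad
  exact this.not_gt h

theorem card_filter_forall_zero_ne_le {m d t : ℕ} (c : Fin d) {S : Finset (Fin m)}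
    (hS : #S ≤ t) :
    (#{J : (Fin m → Bool) → Fin d |
        ∀ b ∈ ({b | ∀ i ∈ S, b i = false} : Finset _), J b ≠ c} : ℝ) ≤
      d ^ 2 ^ m * (1 - 1 / d) ^ 2 ^ (m - t) := by
  have hzero : 2 ^ (m - t) ≤ #({b | ∀ i ∈ S, b i = false} : Finset (Fin m → Bool)) := by
    rw [card_filter_forall_eq, Fintype.card_bool, Fintype.card_fin]
    exact pow_le_pow_right₀ one_le_two (by omega)
  simp only [card_filter_forall_ne, Fintype.card_fun, Fintype.card_fin, Fintype.card_bool]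
  exact mul_le_mul_of_nonneg_left
    (pow_le_pow_of_le_one (Nat.one_sub_one_div_cast_nonneg d) (by simp) hzero) (by positivity)

theorem exists_wERF_general (m d t : ℕ) (hd : 0 < d)
    (h : (2 : ℝ) ^ m * (d : ℝ) * (1 - 1 / (d : ℝ)) ^ (2 ^ (m - t)) < 1) :
    ∃ J : (Fin m → Bool) → Fin d, IsWERF m d t J := by
  set B : ℝ := d ^ 2 ^ m * (1 - 1 / d) ^ 2 ^ (m - t)
  let P : Finset (Fin d × Finset (Fin m)) := {p | #p.2 ≤ t}
  have hP : (#P : ℝ) ≤ d * 2 ^ m := by exact_mod_cast (card_le_univ P).trans_eq (by simp)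
  have hB : 0 ≤ B := mul_nonneg (by positivity) (pow_nonneg (Nat.one_sub_one_div_cast_nonneg d) _)
  let bad (p : Fin d × Finset (Fin m)) : Finset ((Fin m → Bool) → Fin d) :=
    {J | ∀ b ∈ ({b | ∀ i ∈ p.2, b i = false} : Finset _), J b ≠ p.1}
  obtain ⟨J, hJ⟩ := exists_forall_notMem_of_card_mul_lt P bad B
    (fun p hp => card_filter_forall_zero_ne_le p.1 (mem_filter.1 hp).2) <| calc
      (#P : ℝ) * B ≤ d * 2 ^ m * B := by gcongr
      _ = d ^ 2 ^ m * (2 ^ m * d * (1 - 1 / d) ^ 2 ^ (m - t)) := by ring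
      _ < d ^ 2 ^ m * 1 := by gcongr
      _ = Fintype.card ((Fin m → Bool) → Fin d) := by simp
  refine ⟨J, fun c S hS => ?_⟩
  obtain ⟨b, hb, hJb⟩ : ∃ b, (∀ i ∈ S, b i = false) ∧ J b = c := by
    simpa [bad] using hJ (c, S) (mem_filter.2 ⟨mem_univ _, hS⟩)
  exact ⟨b, hJb, hb⟩

/-- If `2^m · d · (1 - 1/d)^{2^{m-t}} < 1`, then an `(m, d, t)`-weak
exposure-resilient function exists. -/
theorem exists_wERF (m d t : ℕ) (hm : 0 < m) (hd : 0 < d) (ht : 0 < t) (htm : t < m)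
    (h : (2 : ℝ) ^ m * (d : ℝ) * (1 - 1 / (d : ℝ)) ^ (2 ^ (m - t)) < 1) :
    ∃ J : (Fin m → Bool) → Fin d, IsWERF m d t J :=
  exists_wERF_general m d t hd h
end

section
/- Define C* : {0,1}^3 → ℤ by C*(X) = 0 if the Hamming weight of X is 0, C*(X) = 1 if the Hamming weight of X is 1 or 2, and C*(X) = 2 if the Hamming weight of X is 3. Then C* is an economic cost function, but for every n and every collection F = {f_1, f_2, f_3} of nonconstant Boolean functions on a common input x ∈ {0,1}^n, the multitask cost function C_F is not equal to C*. -/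
/-- The multitask cost `C_F(X)`: the minimum depth of a decision tree which,
on input `x`, outputs the value `F i x` for every `i` with `X i = true`. -/
noncomputable def multitaskCost {n l : ℕ} (F : Fin l → (Fin n → Bool) → Bool)
    (X : Fin l → Bool) : ℕ :=
  sInf {d | ∃ T : DTree n (Fin l → Bool), T.depth ≤ d ∧
    ∀ (x : Fin n → Bool) (i : Fin l), X i = true → T.eval x i = F i x}

/-- The function `C*` on `{0,1}^3`: `0` at Hamming weight `0`, `1` at weights `1, 2`,
and `2` at weight `3`. -/
def Cstar (X : Fin 3 → Bool) : ℤ :=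
  if (Finset.univ.filter (fun i : Fin 3 => X i = true)).card = 0 then 0
  else if (Finset.univ.filter (fun i : Fin 3 => X i = true)).card = 3 then 2
  else 1

section DependsOn

variable {ι β : Type*} {α : ι → Type*} {f : (Π i, α i) → β}

lemma DependsOn.inter {s t : Set ι}
    (hs : DependsOn f s) (ht : DependsOn f t) : DependsOn f (s ∩ t) := by
  classical
  intro x y hxy
  let z : Π i, α i := fun i => if i ∈ s then x i else y i
  calc f x = f z := hs fun i hi => by simp [z, hi]
    _ = f y := ht fun i hi => by
      by_cases his : i ∈ s
      · simp [z, his, hxy i ⟨his, hi⟩]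
      · simp [z, his]

lemma DependsOn.eq_of_singleton {p q : ι}
    (hp : DependsOn f {p}) (hq : DependsOn f {q}) (hpq : p ≠ q) (x y : Π i, α i) :
    f x = f y :=
  ((Set.singleton_inter_eq_empty (s := {q})).mpr hpq ▸ hp.inter hq).empty x y

end DependsOn

section multitaskCost

variable {n l : ℕ} {F : Fin l → (Fin n → Bool) → Bool} {X : Fin l → Bool}

lemma multitaskCost_le_depth {T : DTree n (Fin l → Bool)}
    (hT : ∀ (x : Fin n → Bool) (i : Fin l), X i = true → T.eval x i = F i x) :
    multitaskCost F X ≤ T.depth :=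
  Nat.sInf_le ⟨T, le_rfl, hT⟩

/-- Since `sInf ∅ = 0`, a nonzero cost is attained by some tree. -/
lemma exists_tree_of_multitaskCost_ne_zero (h : multitaskCost F X ≠ 0) :
    ∃ T : DTree n (Fin l → Bool), T.depth ≤ multitaskCost F X ∧
      ∀ (x : Fin n → Bool) (i : Fin l), X i = true → T.eval x i = F i x :=
  Nat.sInf_mem (Nat.nonempty_of_sInf_eq_succ (Nat.succ_pred_eq_of_ne_zero h).symm)

lemma multitaskCost_le_one_of_dependsOn {q : Fin n} (hF : ∀ i, DependsOn (F i) {q}) :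
    multitaskCost F X ≤ 1 := by
  let T : DTree n (Fin l → Bool) :=
    .node q (.leaf fun i => F i fun _ => false) (.leaf fun i => F i fun _ => true)
  refine (multitaskCost_le_depth (T := T) fun x i _ => ?_).trans (by simp [T, DTree.depth])
  simp only [T, DTree.eval]
  cases hx : x q <;> exact hF i (by simp [hx])

/-- A tree of depth `1` witnessing cost `1` cannot be a leaf, so it queries a single bit. -/
lemma exists_dependsOn_of_multitaskCost_eq_one (h : multitaskCost F X = 1) :
    ∃ q : Fin n, ∀ i, X i = true → DependsOn (F i) {q} := by
  obtain ⟨T, hdepth, hT⟩ := exists_tree_of_multitaskCost_ne_zero (h.symm ▸ one_ne_zero)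
  rw [h] at hdepth
  match T, hdepth with
  | .leaf b, _ => exact absurd (h ▸ multitaskCost_le_depth hT) (by simp [DTree.depth])
  | .node q (.leaf b₀) (.leaf b₁), _ =>
    refine ⟨q, fun i hi x y hxy => ?_⟩
    rw [← hT x i hi, ← hT y i hi]
    simp [DTree.eval, hxy q rfl]
  | .node _ (.node ..) _, hd | .node _ _ (.node ..), hd => simp [DTree.depth] at hd

end multitaskCost

/-- `C*` is an economic cost function, yet it is not the multitask cost
function of any collection of three nonconstant Boolean functions. -/
theorem Cstar_econ_not_multitask :
    IsEconomicCost Cstar ∧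
    ∀ (n : ℕ) (F : Fin 3 → (Fin n → Bool) → Bool),
      (∀ i : Fin 3, ∃ x y : Fin n → Bool, F i x ≠ F i y) →
      (fun X => (multitaskCost F X : ℤ)) ≠ Cstar := by
  refine ⟨by unfold IsEconomicCost Cstar; decide, fun n F hF hC => ?_⟩
  have cost_eq (X : Fin 3 → Bool) : (multitaskCost F X : ℤ) = Cstar X := congrFun hC X
  have cost_eq_one (X : Fin 3 → Bool) (hX : Cstar X = 1) : multitaskCost F X = 1 := by
    exact_mod_cast (cost_eq X).trans hX
  obtain ⟨p, hp⟩ :=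
    exists_dependsOn_of_multitaskCost_eq_one (cost_eq_one ![true, true, false] rfl)
  obtain ⟨q, hq⟩ :=
    exists_dependsOn_of_multitaskCost_eq_one (cost_eq_one ![true, false, true] rfl)
  have hpq : p = q := by
    by_contra hpq
    obtain ⟨x, y, hxy⟩ := hF 0
    exact hxy ((hp 0 rfl).eq_of_singleton (hq 0 rfl) hpq x y)
  subst hpq
  have hle : multitaskCost F (fun _ => true) ≤ 1 :=
    multitaskCost_le_one_of_dependsOn fun i => by
      fin_cases i; exacts [hp 0 rfl, hp 1 rfl, hq 2 rfl]
  have h2 : (multitaskCost F (fun _ => true) : ℤ) = 2 := cost_eq _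
  omega
end

section
/- Let G : {0,1}^n → {0,1} be a Boolean function such that both G and its negation have unambiguous DNF representations in which every clause has size at most s. For each clause c of either representation, let w_c ∈ {0,1,*}^n be the string with 0/1 entries exactly on the variables of c, set in the unique way satisfying c, and let V be the set of all such witnesses. Then V is a total unique search problem with s(V) ≤ s and D(V) ≥ D(G). -/
namespace DTree

/-- Apply a function to all leaves. -/
def mapLeaves {n : ℕ} {β γ : Type} (g : β → γ) : DTree n β → DTree n γ
  | .leaf b => .leaf (g b)
  | .node i t0 t1 => .node i (mapLeaves g t0) (mapLeaves g t1)

lemma eval_mapLeaves {n : ℕ} {β γ : Type} (g : β → γ) (T : DTree n β)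
    (x : Fin n → Bool) : (mapLeaves g T).eval x = g (T.eval x) := by
  induction T with
  | leaf b => rfl
  | node i t0 t1 ih0 ih1 =>
    simp only [mapLeaves, eval]
    split <;> simp [ih0, ih1]

lemma depth_mapLeaves {n : ℕ} {β γ : Type} (g : β → γ) (T : DTree n β) :
    (mapLeaves g T).depth = T.depth := by
  induction T with
  | leaf b => rfl
  | node i t0 t1 ih0 ih1 => simp [mapLeaves, depth, ih0, ih1]

/-- Full decision tree querying all indices of `l` computing `f` restricted. -/
def treeOf {n : ℕ} {β : Type} : List (Fin n) → ((Fin n → Bool) → β) → DTree n β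
  | [], f => .leaf (f fun _ => false)
  | i :: l, f =>
      .node i (treeOf l fun x => f (Function.update x i false))
              (treeOf l fun x => f (Function.update x i true))

lemma depth_treeOf {n : ℕ} {β : Type} (l : List (Fin n)) (f : (Fin n → Bool) → β) :
    (treeOf l f).depth ≤ l.length := by
  induction l generalizing f with
  | nil => simp [treeOf, depth]
  | cons i l ih =>
    simp only [treeOf, depth, List.length_cons]
    have := ih (fun x => f (Function.update x i false))
    have := ih (fun x => f (Function.update x i true))
    omega

lemma eval_treeOf {n : ℕ} {β : Type} (l : List (Fin n)) (f : (Fin n → Bool) → β)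
    (x : Fin n → Bool) :
    (treeOf l f).eval x = f (fun j => if j ∈ l then x j else false) := by
  induction l generalizing f with
  | nil => simp [treeOf, eval]
  | cons i l ih =>
    simp only [treeOf, eval]
    by_cases hxi : x i
    · rw [if_pos hxi, ih]
      congr 1
      funext j
      by_cases hji : j = i
      · subst hji; simp [Function.update, hxi]
      · simp [Function.update, hji]
    · rw [if_neg hxi, ih]
      congr 1
      funext j
      by_cases hji : j = i
      · subst hji; simp [Function.update]
        simp at hxi; simp [hxi]
      · simp [Function.update, hji]

end DTree

/-- If both `G` and its negation have unambiguous DNF representations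
with clauses of size at most `s`, then the set `V` of witnesses obtained from the
clauses of both representations (each clause, as a partial assignment, is its own
witness) is a total unique search problem with `s(V) ≤ s` and `D(V) ≥ D(G)`. -/
theorem tusp_from_udnfs {n s : ℕ} (G : (Fin n → Bool) → Bool)
    (C1 C2 : Set (Fin n → Option Bool))
    (h1 : IsUDNF G C1) (h2 : IsUDNF (fun x => !(G x)) C2)
    (hs1 : ∀ c ∈ C1, wSize c ≤ s) (hs2 : ∀ c ∈ C2, wSize c ≤ s) :
    TotalSP (C1 ∪ C2) ∧ UniqueSP (C1 ∪ C2) ∧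
      sW (C1 ∪ C2) ≤ s ∧ queryComplexity G ≤ DW (C1 ∪ C2) := by
  classical
  obtain ⟨h1e, h1u⟩ := h1
  obtain ⟨h2e, h2u⟩ := h2
  have htotal : TotalSP (C1 ∪ C2) := by
    intro x
    by_cases hG : G x = true
    · obtain ⟨c, hc, ha⟩ := (h1e x).mp hG
      exact ⟨c, Or.inl hc, ha⟩
    · have hG' : (!(G x)) = true := by
        simp only [Bool.not_eq_true'] at *
        simpa using hG
      obtain ⟨c, hc, ha⟩ := (h2e x).mp hG'
      exact ⟨c, Or.inr hc, ha⟩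
  have hnotboth : ∀ x : Fin n → Bool, ∀ c ∈ C1, ∀ c' ∈ C2,
      Agrees c x → Agrees c' x → False := by
    intro x c hc c' hc' ha ha'
    have hGt : G x = true := (h1e x).mpr ⟨c, hc, ha⟩
    have hGf : (!(G x)) = true := (h2e x).mpr ⟨c', hc', ha'⟩
    simp [hGt] at hGf
  have hunique : UniqueSP (C1 ∪ C2) := by
    intro x w hw w' hw' ha ha'
    rcases hw with hw | hw <;> rcases hw' with hw' | hw'
    · exact h1u x w hw w' hw' ha ha'
    · exact absurd (hnotboth x w hw w' hw' ha ha') not_false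
    · exact absurd (hnotboth x w' hw' w hw ha' ha) not_false
    · exact h2u x w hw w' hw' ha ha'
  have hsW : sW (C1 ∪ C2) ≤ s := by
    apply csSup_le'
    rintro m ⟨w, hw | hw, rfl⟩
    · exact hs1 w hw
    · exact hs2 w hw
  refine ⟨htotal, hunique, hsW, ?_⟩
  -- there exists a tree of depth n solving the search problem
  have hB : ∃ T : DTree n (Option (Fin n → Option Bool)),
      T.depth ≤ n ∧ Solves T (C1 ∪ C2) := by
    refine ⟨DTree.treeOf (List.finRange n)
      (fun x => if h : ∃ w ∈ C1 ∪ C2, Agrees w x then some h.choose else none),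
      ?_, ?_⟩
    · simpa using DTree.depth_treeOf (List.finRange n) _
    · intro x
      have hx : (fun j => if j ∈ List.finRange n then x j else false) = x := by
        funext j; simp [List.mem_finRange]
      constructor
      · intro h
        rw [DTree.eval_treeOf, hx, dif_pos h]
        exact ⟨h.choose, h.choose_spec.1, rfl, h.choose_spec.2⟩
      · intro h
        rw [DTree.eval_treeOf, hx, dif_neg h]
  have hDW_mem : DW (C1 ∪ C2) ∈ {d | ∃ T : DTree n (Option (Fin n → Option Bool)),
      T.depth ≤ d ∧ Solves T (C1 ∪ C2)} := by
    apply Nat.sInf_mem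
    exact ⟨n, hB⟩
  obtain ⟨T, hdT, hsol⟩ := hDW_mem
  apply Nat.sInf_le
  refine ⟨T.mapLeaves (fun o => match o with
    | some w => decide (w ∈ C1)
    | none => false), ?_, ?_⟩
  · rw [DTree.depth_mapLeaves]; exact hdT
  · intro x
    rw [DTree.eval_mapLeaves]
    obtain ⟨w, hw, hev, ha⟩ := (hsol x).1 (htotal x)
    rw [hev]
    by_cases hc1 : w ∈ C1
    · have : G x = true := (h1e x).mpr ⟨w, hc1, ha⟩
      simp [hc1, this]
    · have hc2 : w ∈ C2 := hw.resolve_left hc1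
      have hGf : (!(G x)) = true := (h2e x).mpr ⟨w, hc2, ha⟩
      simp only [Bool.not_eq_true'] at hGf
      simp [hc1, hGf]
end
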